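/- arXiv:1906.05463 — 5 statements merged into one kernel-verified Lean document; each statement's English description precedes it below -/
import Mathlib

section
/- Let A be an affine arrangement of n hyperplanes in K^l and define I(bar(A)) as the set of strictly increasing (l+1)-tuples (i_1,...,i_{l+1}) in [n+1]^{l+1} such that the projective hyperplanes bar(H)_{i_1}, ..., bar(H)_{i_{l+1}} have nonempty common intersection. Then A is essential if and only if I(bar(A)) is a proper subset of the set of all strictly increasing (l+1)-tuples in [n+1]^{l+1}. -/
open MvPolynomial
open scoped Classical

/-- The affine hyperplane solution set `{x | ∑ aₖ xₖ = b}` in `K^l`. -/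
def hypSet (K : Type*) [CommRing K] {l : ℕ} (a : Fin l → K) (b : K) : Set (Fin l → K) :=
  {x | ∑ k, a k * x k = b}

/-- Dimension of a subset of `K^l` (intended: an affine subspace), with `adim ∅ = -1`. -/
noncomputable def adim (K : Type*) [CommRing K] {l : ℕ} (S : Set (Fin l → K)) : ℤ :=
  if S = ∅ then -1 else Module.finrank K (affineSpan K S).direction

/-- The homogenized forms of the cone `c𝒜` of the affine arrangement with forms
`x ↦ ∑ aᵢₖ xₖ - bᵢ`; the last index corresponds to the hyperplane at infinity. A projective
point of `KP^l` is represented by a nonzero `v : Fin (l+1) → K`, and `v` lies on the `i`-th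
projective hyperplane of `bar 𝒜` iff `coneForm a b i v = 0`. -/
def coneForm {K : Type*} [CommRing K] {l n : ℕ} (a : Fin n → Fin l → K) (b : Fin n → K)
    (i : Fin (n + 1)) (v : Fin (l + 1) → K) : K :=
  if h : (i : ℕ) < n then
    (∑ k : Fin l, a ⟨i, h⟩ k * v k.castSucc) - b ⟨i, h⟩ * v (Fin.last l)
  else v (Fin.last l)

/-- `𝓘(bar 𝒜)`: the set of strictly increasing `(l+1)`-tuples of indices in `[n+1]` whose
corresponding projective hyperplanes of `bar 𝒜` have nonempty common intersection. -/
def Ibar (K : Type*) [CommRing K] {l n : ℕ} (a : Fin n → Fin l → K) (b : Fin n → K) :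
    Set (Fin (l + 1) → Fin (n + 1)) :=
  {t | StrictMono t ∧ ∃ v : Fin (l + 1) → K, v ≠ 0 ∧ ∀ j, coneForm a b (t j) v = 0}

/-!
A strictly increasing `(l+1)`-tuple lies outside `Ibar` exactly when its cone forms have no common
nonzero zero. If the tuple contains the hyperplane at infinity, this says that the normals of the
other `l` hyperplanes are linearly independent, i.e. that these meet in a single point. Otherwise
all `l + 1` normals, and hence the linear parts of the cone forms, have no common nonzero zero in
`K^l`; being linearly dependent, one of them can be dropped without losing this property.
-/

open Matrix

theorem Matrix.mulVec_injective_iff_forall_mulVec_eq_zero {K m n : Type*} [CommRing K] [Fintype n]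
    (M : Matrix m n K) : Function.Injective M.mulVec ↔ ∀ v, M *ᵥ v = 0 → v = 0 := by
  rw [← ker_mulVecLin_eq_bot_iff, LinearMap.ker_eq_bot, coe_mulVecLin]

theorem Matrix.exists_mulVec_submatrix_succAbove_injective {K : Type*} [Field K] {m : ℕ}
    (M : Matrix (Fin (m + 1)) (Fin m) K) (hM : Function.Injective M.mulVec) :
    ∃ j₀ : Fin (m + 1), Function.Injective (M.submatrix j₀.succAbove id).mulVec := by
  have hdep : ¬Function.Injective M.vecMulLinear := fun h => by
    simpa using LinearMap.finrank_le_finrank_of_injective h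
  obtain ⟨g, hg, hg0⟩ : ∃ g, g ᵥ* M = 0 ∧ g ≠ 0 := by
    simpa [injective_iff_map_eq_zero] using hdep
  -- a row with nonzero coefficient in the relation `g ᵥ* M = 0` is the one to drop
  obtain ⟨j₀, hj₀⟩ := Function.ne_iff.1 hg0
  refine ⟨j₀, (mulVec_injective_iff_forall_mulVec_eq_zero _).2 fun w hw => ?_⟩
  have hsingle : M *ᵥ w = Pi.single j₀ ((M *ᵥ w) j₀) := by
    ext j
    rcases eq_or_ne j j₀ with rfl | hj
    · simp
    · obtain ⟨i, rfl⟩ := Fin.exists_succAbove_eq hj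
      rw [Pi.single_eq_of_ne hj]
      exact congrFun hw i
  have hzero : g j₀ * (M *ᵥ w) j₀ = 0 := by
    rw [← dotProduct_single, ← hsingle, dotProduct_mulVec, hg, zero_dotProduct]
  have hMw : M *ᵥ w = 0 := by
    rw [hsingle, (mul_eq_zero.1 hzero).resolve_left hj₀, Pi.single_zero]
  exact hM (hMw.trans (mulVec_zero M).symm)

theorem iInter_hypSet_eq {K ι : Type*} [CommRing K] {l : ℕ} (A : ι → Fin l → K) (c : ι → K) :
    ⋂ j, hypSet K (A j) (c j) = {x | Matrix.of A *ᵥ x = c} := by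
  ext x
  simp [hypSet, funext_iff, mulVec, dotProduct]

theorem exists_iInter_hypSet_eq_singleton_iff {K : Type*} [Field K] {l : ℕ}
    (A : Fin l → Fin l → K) (c : Fin l → K) :
    (∃ x, ⋂ j, hypSet K (A j) (c j) = {x}) ↔ Function.Injective (Matrix.of A).mulVec := by
  simp_rw [iInter_hypSet_eq]
  constructor
  · rintro ⟨x, hx⟩ u v huv
    obtain ⟨hxc, hunique⟩ := Set.eq_singleton_iff_unique_mem.1 hx
    have hshift : Matrix.of A *ᵥ (x + (u - v)) = c := by
      simp only [mulVec_add, mulVec_sub, huv, sub_self, add_zero]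
      exact hxc
    simpa [sub_eq_zero] using hunique _ hshift
  · intro hinj
    obtain ⟨x, hx⟩ := mulVec_surjective_iff_isUnit.2 (mulVec_injective_iff_isUnit.1 hinj) c
    exact ⟨x, Set.eq_singleton_iff_unique_mem.2 ⟨hx, fun y hy => hinj (hy.trans hx.symm)⟩⟩

theorem Fin.strictMono_snoc_castSucc_last {m n : ℕ} {s : Fin m → Fin n} (hs : StrictMono s) :
    StrictMono (Fin.snoc (Fin.castSucc ∘ s) (Fin.last n) : Fin (m + 1) → Fin (n + 1)) := by
  intro i j hij
  induction i using Fin.lastCases with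
  | last => exact absurd hij (Fin.le_last j).not_gt
  | cast i =>
    induction j using Fin.lastCases with
    | last => simp [Fin.castSucc_lt_last]
    | cast j => simpa using hs (Fin.castSucc_lt_castSucc_iff.1 hij)

theorem StrictMono.exists_eq_castSucc_comp {m n : ℕ} {t : Fin m → Fin (n + 1)} (ht : StrictMono t)
    (hlast : ∀ j, t j ≠ Fin.last n) : ∃ s : Fin m → Fin n, StrictMono s ∧ t = Fin.castSucc ∘ s :=
  ⟨fun j => (t j).castPred (hlast j), fun _ _ hij => Fin.castPred_lt_castPred_iff.2 (ht hij),
    funext fun _ => (Fin.castSucc_castPred _ _).symm⟩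

section Cone

variable {K : Type*} [CommRing K] {l n : ℕ} (a : Fin n → Fin l → K) (b : Fin n → K)

theorem coneForm_castSucc (i : Fin n) (v : Fin (l + 1) → K) :
    coneForm a b i.castSucc v = a i ⬝ᵥ Fin.init v - b i * v (Fin.last l) := by
  simp [coneForm, dotProduct, Fin.init]

theorem coneForm_last (v : Fin (l + 1) → K) : coneForm a b (Fin.last n) v = v (Fin.last l) := by
  simp [coneForm]

theorem forall_coneForm_snoc_eq_zero_iff {m : ℕ} (s : Fin m → Fin n) (v : Fin (l + 1) → K) :
    (∀ j, coneForm a b ((Fin.snoc (Fin.castSucc ∘ s) (Fin.last n) : Fin (m + 1) → _) j) v = 0) ↔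
      v (Fin.last l) = 0 ∧ Matrix.of (fun j => a (s j)) *ᵥ Fin.init v = 0 := by
  simp only [Fin.forall_fin_succ', Fin.snoc_castSucc, Fin.snoc_last, Function.comp_apply,
    coneForm_castSucc, coneForm_last, funext_iff, mulVec, Pi.zero_apply, of_apply]
  constructor
  · rintro ⟨hs, hlast⟩
    exact ⟨hlast, fun j => by simpa [hlast] using hs j⟩
  · rintro ⟨hlast, hs⟩
    exact ⟨fun j => by simpa [hlast] using hs j, hlast⟩

theorem notMem_Ibar_iff {t : Fin (l + 1) → Fin (n + 1)} (ht : StrictMono t) :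
    t ∉ Ibar K a b ↔ ∀ v, (∀ j, coneForm a b (t j) v = 0) → v = 0 := by
  simp only [Ibar, Set.mem_ofPred_eq, ht, true_and, not_exists, not_and]
  exact forall_congr' fun _ => not_imp_not

theorem notMem_Ibar_snoc_iff {s : Fin l → Fin n} (hs : StrictMono s) :
    Fin.snoc (Fin.castSucc ∘ s) (Fin.last n) ∉ Ibar K a b ↔
      Function.Injective (Matrix.of fun j => a (s j)).mulVec := by
  rw [notMem_Ibar_iff a b (Fin.strictMono_snoc_castSucc_last hs),
    mulVec_injective_iff_forall_mulVec_eq_zero]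
  simp_rw [forall_coneForm_snoc_eq_zero_iff]
  constructor
  · intro h w hw
    have hzero := h (Fin.snoc w 0) (by simpa using hw)
    funext k
    simpa using congrFun hzero k.castSucc
  · rintro h v ⟨hlast, hv⟩
    funext j
    induction j using Fin.lastCases with
    | last => exact hlast
    | cast j => exact congrFun (h _ hv) j

theorem mulVec_injective_of_castSucc_comp_notMem_Ibar {s : Fin (l + 1) → Fin n}
    (hs : StrictMono s) (h : Fin.castSucc ∘ s ∉ Ibar K a b) :
    Function.Injective (Matrix.of fun j => a (s j)).mulVec := by
  rw [notMem_Ibar_iff a b (Fin.strictMono_castSucc.comp hs)] at h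
  refine (mulVec_injective_iff_forall_mulVec_eq_zero _).2 fun w hw => ?_
  have hzero := h (Fin.snoc w 0) fun j => by
    simp only [Function.comp_apply, coneForm_castSucc, Fin.init_snoc, Fin.snoc_last, mul_zero,
      sub_zero]
    exact congrFun hw j
  funext k
  simpa using congrFun hzero k.castSucc

end Cone

theorem stmt1_general {K : Type*} [Field K] {l n : ℕ} (a : Fin n → Fin l → K) (b : Fin n → K) :
    (∃ t : Fin l → Fin n, StrictMono t ∧
        ∃ x : Fin l → K, (⋂ j, hypSet K (a (t j)) (b (t j))) = {x}) ↔
      Ibar K a b ⊂ {t | StrictMono t} := by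
  simp_rw [exists_iInter_hypSet_eq_singleton_iff]
  rw [Set.ssubset_iff_of_subset (t := {t | StrictMono t}) fun t ht => ht.1]
  constructor
  · rintro ⟨s, hs, hinj⟩
    exact ⟨_, Fin.strictMono_snoc_castSucc_last hs, (notMem_Ibar_snoc_iff a b hs).2 hinj⟩
  rintro ⟨t, ht, htI⟩
  by_cases hlast : t (Fin.last l) = Fin.last n
  · obtain ⟨s, hs, hts⟩ := (ht.comp Fin.strictMono_castSucc).exists_eq_castSucc_comp fun j =>
      ((ht (Fin.castSucc_lt_last j)).trans_eq hlast).ne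
    obtain rfl : t = Fin.snoc (Fin.castSucc ∘ s) (Fin.last n) := by
      rw [← hts, ← hlast]
      exact (Fin.snoc_init_self t).symm
    exact ⟨s, hs, (notMem_Ibar_snoc_iff a b hs).1 htI⟩
  · obtain ⟨s, hs, rfl⟩ := ht.exists_eq_castSucc_comp fun j hj =>
      hlast (Fin.last_le_iff.1 (hj ▸ ht.monotone (Fin.le_last j)))
    obtain ⟨j₀, hj₀⟩ := exists_mulVec_submatrix_succAbove_injective _
      (mulVec_injective_of_castSucc_comp_notMem_Ibar a b hs htI)
    exact ⟨s ∘ j₀.succAbove, hs.comp (Fin.strictMono_succAbove j₀), hj₀⟩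

/-- Lemma 2.2, (1) ⟺ (3): `𝒜` is essential (some `l` of its hyperplanes
intersect in a single point) iff `𝓘(bar 𝒜)` is a proper subset of the set of all strictly
increasing `(l+1)`-tuples in `[n+1]^{l+1}`. -/
theorem stmt1 {K : Type*} [Field K] {l n : ℕ} (a : Fin n → Fin l → K) (b : Fin n → K)
    (ha : ∀ i, a i ≠ 0) :
    (∃ t : Fin l → Fin n, StrictMono t ∧
        ∃ x : Fin l → K, (⋂ j, hypSet K (a (t j)) (b (t j))) = {x}) ↔
      Ibar K a b ⊂ {t | StrictMono t} :=
  stmt1_general a b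
end

section
/- Let A be an essential affine arrangement of n hyperplanes in K^l. Then the set I(bar(A)) of increasing (l+1)-tuples of indices whose corresponding projective hyperplanes in bar(A) have nonempty intersection determines the intersection lattice L(A), and conversely L(A) determines I(bar(A)). -/
open MvPolynomial
open scoped Classical

/-- Combinatorial equivalence of two ordered arrangements (over possibly different rings):
all corresponding intersections of subfamilies have the same dimension (`-1` for `∅`). -/
noncomputable def CombEquiv (K₁ K₂ : Type*) [CommRing K₁] [CommRing K₂] {l n : ℕ}
    (a₁ : Fin n → Fin l → K₁) (b₁ : Fin n → K₁)
    (a₂ : Fin n → Fin l → K₂) (b₂ : Fin n → K₂) : Prop :=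
  ∀ (k : ℕ) (t : Fin k → Fin n), StrictMono t →
    adim K₁ (⋂ j, hypSet K₁ (a₁ (t j)) (b₁ (t j))) =
      adim K₂ (⋂ j, hypSet K₂ (a₂ (t j)) (b₂ (t j)))

/-!
Homogenizing, the `i`-th projective hyperplane of `bar 𝒜` is the kernel of the row `(aᵢ, -bᵢ)` in
`K^(l+1)`, and the hyperplane at infinity is the kernel of `e = (0, …, 0, 1)`. An `(l+1)`-tuple lies
in `𝓘(bar 𝒜)` iff its rows are dependent, so `𝓘(bar 𝒜)` lists the non-bases of the family of rows;
as essentiality makes the rows span, the bases determine the rank of every subfamily.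

That rank function and `L(𝒜)` determine each other. For an index set `T` with affine part `s`
and `X_s = ⋂_{i ∈ s} Hᵢ`, `rank T = rank {aᵢ | i ∈ s} + [∞ ∈ T or X_s = ∅]`, a nonempty `X_s` has dimension
`l - rank {aᵢ | i ∈ s}`, and `rank {aᵢ | i ∈ s}` is the largest codimension of a nonempty `X_{s'}`,
`s' ⊆ s`, attained at an independent `s'`.
-/

open Module Submodule

theorem Set.exists_strictMono_fin_range_eq {α : Type*} [LinearOrder α] [Finite α] {U : Set α}
    {k : ℕ} (hU : U.ncard = k) : ∃ t : Fin k → α, StrictMono t ∧ Set.range t = U := by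
  classical
  have := Fintype.ofFinite α
  have hcard : U.toFinset.card = k := by rwa [← Set.ncard_eq_toFinset_card']
  exact ⟨U.toFinset.orderEmbOfFin hcard, (U.toFinset.orderEmbOfFin hcard).strictMono,
    by rw [Finset.range_orderEmbOfFin, Set.coe_toFinset]⟩

section LinearAlgebra

variable {K V ι : Type*} [Field K] [AddCommGroup V] [Module K V]

theorem linearIndepOn_iff_ncard_eq_finrank_span {r : ι → V} {U : Set ι} (hU : U.Finite) :
    LinearIndepOn K r U ↔ U.ncard = finrank K (span K (r '' U)) := by
  have := hU.fintype
  rw [LinearIndepOn, linearIndependent_iff_card_eq_finrank_span, Set.finrank,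
    ← Set.image_eq_range, Set.ncard_eq_toFinset_card', Set.toFinset_card]

theorem finrank_span_image_le_ncard (r : ι → V) {U : Set ι} (hU : U.Finite) :
    finrank K (span K (r '' U)) ≤ U.ncard := by
  have := hU.fintype
  rw [Set.image_eq_range, Set.ncard_eq_toFinset_card', Set.toFinset_card]
  exact finrank_range_le_card _

theorem finrank_map_add_finrank_inf_ker [FiniteDimensional K V] {W : Type*} [AddCommGroup W]
    [Module K W] (f : V →ₗ[K] W) (p : Submodule K V) :
    finrank K (p.map f) + finrank K ↥(p ⊓ LinearMap.ker f) = finrank K p := by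
  have h := LinearMap.finrank_range_add_finrank_ker (f.domRestrict p)
  rw [LinearMap.range_domRestrict, LinearMap.ker_domRestrict] at h
  rwa [← (comapSubtypeEquivOfLe (inf_le_left : p ⊓ LinearMap.ker f ≤ p)).finrank_eq, comap_inf,
    comap_subtype_self, top_inf_eq]

theorem notMem_span_iff_exists_dotProduct [Fintype ι] [DecidableEq ι] {S : Set (ι → K)}
    {v : ι → K} : v ∉ span K S ↔ ∃ w, (∀ u ∈ S, u ⬝ᵥ w = 0) ∧ v ⬝ᵥ w ≠ 0 := by
  constructor
  · intro hv
    obtain ⟨f, hfv, hSf⟩ := exists_le_ker_of_notMem hv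
    have hf : ∀ u, u ⬝ᵥ (dotProductEquiv K ι).symm f = f u := fun u => by
      rw [dotProduct_comm, ← dotProductEquiv_apply_apply, LinearEquiv.apply_symm_apply]
    refine ⟨(dotProductEquiv K ι).symm f, fun u hu => ?_, by rwa [hf]⟩
    rw [hf]
    exact hSf (subset_span hu)
  · rintro ⟨w, hSw, hvw⟩ hv
    have hle : span K S ≤ LinearMap.ker (dotProductEquiv K ι w) := span_le.mpr fun u hu => by
      simpa [dotProduct_comm] using hSw u hu
    exact hvw (by simpa [dotProduct_comm] using hle hv)

variable {K₁ K₂ V₁ V₂ : Type*} [Field K₁] [Field K₂] [AddCommGroup V₁] [Module K₁ V₁]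
  [AddCommGroup V₂] [Module K₂ V₂] [FiniteDimensional K₂ V₂] [Finite ι]

theorem finrank_span_image_le_of_forall_basis {r₁ : ι → V₁} {r₂ : ι → V₂}
    (hspan : span K₁ (Set.range r₁) = ⊤)
    (hbasis : ∀ U : Set ι, LinearIndepOn K₁ r₁ U → U.ncard = finrank K₁ V₁ →
      LinearIndepOn K₂ r₂ U)
    (T : Set ι) : finrank K₁ (span K₁ (r₁ '' T)) ≤ finrank K₂ (span K₂ (r₂ '' T)) := by
  obtain ⟨B, hBT, -, hTB, hB⟩ :=
    exists_linearIndepOn_extension (linearIndepOn_empty K₁ r₁) (Set.empty_subset T)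
  obtain ⟨U, -, hBU, hUspan, hU⟩ := exists_linearIndepOn_extension hB (Set.subset_univ B)
  have hUtop : span K₁ (r₁ '' U) = ⊤ := by
    rw [eq_top_iff, ← hspan, ← Set.image_univ]
    exact span_le.mpr hUspan
  have hUcard : U.ncard = finrank K₁ V₁ := by
    rw [(linearIndepOn_iff_ncard_eq_finrank_span U.toFinite).mp hU, hUtop, finrank_top]
  have hB₂ : LinearIndepOn K₂ r₂ B := (hbasis U hU hUcard).mono hBU
  calc finrank K₁ (span K₁ (r₁ '' T))
      = finrank K₁ (span K₁ (r₁ '' B)) := by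
        rw [le_antisymm (span_mono (Set.image_mono hBT)) (span_le.mpr hTB)]
    _ = B.ncard := ((linearIndepOn_iff_ncard_eq_finrank_span B.toFinite).mp hB).symm
    _ = finrank K₂ (span K₂ (r₂ '' B)) :=
        (linearIndepOn_iff_ncard_eq_finrank_span B.toFinite).mp hB₂
    _ ≤ finrank K₂ (span K₂ (r₂ '' T)) := finrank_mono (span_mono (Set.image_mono hBT))

end LinearAlgebra

section Adim

variable {K : Type*} [CommRing K] {l : ℕ}

theorem adim_eq_neg_one_iff (S : Set (Fin l → K)) : adim K S = -1 ↔ S = ∅ := by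
  unfold adim
  split_ifs with h <;> simp [h]

theorem adim_singleton [Nontrivial K] (x : Fin l → K) : adim K {x} = 0 := by
  rw [adim, if_neg (Set.singleton_ne_empty x), direction_affineSpan, vectorSpan_singleton,
    finrank_zero_of_subsingleton, Nat.cast_zero]

end Adim

def Fin.initLinearMap (K : Type*) [Semiring K] (l : ℕ) : (Fin (l + 1) → K) →ₗ[K] Fin l → K :=
  LinearMap.funLeft K K Fin.castSucc

section InitLinearMap

variable {K : Type*} [Semiring K] {l : ℕ}

@[simp] theorem Fin.initLinearMap_apply (v : Fin (l + 1) → K) (k : Fin l) :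
    Fin.initLinearMap K l v k = v k.castSucc :=
  rfl

@[simp] theorem Fin.initLinearMap_snoc (x : Fin l → K) (c : K) :
    Fin.initLinearMap K l (Fin.snoc x c) = x :=
  funext fun k => by simp

@[simp] theorem Fin.initLinearMap_single_last :
    Fin.initLinearMap K l (Pi.single (Fin.last l) 1) = 0 :=
  funext fun k => by simp

theorem Fin.ker_initLinearMap :
    LinearMap.ker (Fin.initLinearMap K l) = K ∙ Pi.single (Fin.last l) 1 := by
  ext v
  rw [LinearMap.mem_ker, mem_span_singleton, funext_iff]
  constructor
  · intro hv
    refine ⟨v (Fin.last l), funext fun j => ?_⟩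
    induction j using Fin.lastCases with
    | last => simp
    | cast k => simpa using (hv k).symm
  · rintro ⟨c, rfl⟩ k
    simp

end InitLinearMap

section OneField

variable {K : Type*} [Field K] {l n : ℕ} (a : Fin n → Fin l → K) (b : Fin n → K)

def coneRow : Fin (n + 1) → Fin (l + 1) → K :=
  Fin.lastCases (Pi.single (Fin.last l) 1) fun i => Fin.snoc (a i) (-b i)

noncomputable def coneRank (T : Set (Fin (n + 1))) : ℕ :=
  finrank K (span K (coneRow a b '' T))

def hypInter (s : Set (Fin n)) : Set (Fin l → K) :=
  ⋂ i ∈ s, hypSet K (a i) (b i)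

@[simp] theorem coneRow_last : coneRow a b (Fin.last n) = Pi.single (Fin.last l) 1 :=
  Fin.lastCases_last

@[simp] theorem coneRow_castSucc (i : Fin n) :
    coneRow a b i.castSucc = Fin.snoc (a i) (-b i) :=
  Fin.lastCases_castSucc i

theorem coneRow_castSucc_dotProduct (i : Fin n) (w : Fin (l + 1) → K) :
    coneRow a b i.castSucc ⬝ᵥ w = a i ⬝ᵥ Fin.init w - b i * w (Fin.last l) := by
  simp [dotProduct, Fin.sum_univ_castSucc, Fin.init, sub_eq_add_neg]

theorem coneForm_eq_coneRow_dotProduct (i : Fin (n + 1)) (v : Fin (l + 1) → K) :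
    coneForm a b i v = coneRow a b i ⬝ᵥ v := by
  induction i using Fin.lastCases with
  | last => simp [coneForm, single_dotProduct]
  | cast i =>
    rw [coneRow_castSucc_dotProduct, coneForm, dif_pos (by simp)]
    rfl

theorem mem_Ibar_iff {t : Fin (l + 1) → Fin (n + 1)} :
    t ∈ Ibar K a b ↔ StrictMono t ∧ coneRank a b (Set.range t) ≠ l + 1 := by
  let M : Matrix (Fin (l + 1)) (Fin (l + 1)) K := Matrix.of fun j => coneRow a b (t j)
  have hdep : (∃ v : Fin (l + 1) → K, v ≠ 0 ∧ ∀ j, coneForm a b (t j) v = 0) ↔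
      ¬ LinearIndependent K M.row := by
    rw [Matrix.linearIndependent_rows_iff_isUnit, Matrix.isUnit_iff_isUnit_det, isUnit_iff_ne_zero,
      not_not, ← Matrix.exists_mulVec_eq_zero_iff]
    simp only [coneForm_eq_coneRow_dotProduct, funext_iff]
    rfl
  rw [Ibar, Set.mem_ofPred_eq, hdep, linearIndependent_iff_card_eq_finrank_span, Fintype.card_fin,
    Set.finrank, coneRank, ← Set.range_comp, ne_comm]
  rfl

theorem map_initLinearMap_span_coneRow (T : Set (Fin (n + 1))) :
    (span K (coneRow a b '' T)).map (Fin.initLinearMap K l) =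
      span K (a '' (Fin.castSucc ⁻¹' T)) := by
  rw [map_span, Set.image_image]
  apply le_antisymm
  · refine span_le.mpr ?_
    rintro _ ⟨i, hi, rfl⟩
    induction i using Fin.lastCases with
    | last => simp
    | cast i => exact subset_span ⟨i, hi, by simp⟩
  · refine span_mono ?_
    rintro _ ⟨i, hi, rfl⟩
    exact ⟨i.castSucc, hi, by simp⟩

theorem mem_hypInter {s : Set (Fin n)} {x : Fin l → K} :
    x ∈ hypInter a b s ↔ ∀ i ∈ s, a i ⬝ᵥ x = b i := by
  simp [hypInter, hypSet, dotProduct]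

theorem iInter_hypSet_eq_hypInter_range {κ : Type*} (t : κ → Fin n) :
    ⋂ j, hypSet K (a (t j)) (b (t j)) = hypInter a b (Set.range t) := by
  rw [hypInter, Set.biInter_range]

theorem hypInter_nonempty_iff (s : Set (Fin n)) :
    (hypInter a b s).Nonempty ↔
      Pi.single (Fin.last l) 1 ∉ span K (coneRow a b '' (Fin.castSucc '' s)) := by
  simp only [notMem_span_iff_exists_dotProduct, Set.forall_mem_image,
    coneRow_castSucc_dotProduct, single_dotProduct, one_mul, sub_eq_zero]
  constructor
  · rintro ⟨x, hx⟩
    refine ⟨Fin.snoc x 1, fun i hi => ?_, by simp⟩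
    simpa using (mem_hypInter a b).mp hx i hi
  · rintro ⟨w, hw, hlast⟩
    refine ⟨(w (Fin.last l))⁻¹ • Fin.init w, (mem_hypInter a b).mpr fun i hi => ?_⟩
    rw [dotProduct_smul, hw hi, smul_eq_mul, mul_comm, mul_inv_cancel_right₀ hlast]

theorem single_last_mem_span_coneRow_iff (T : Set (Fin (n + 1))) :
    Pi.single (Fin.last l) 1 ∈ span K (coneRow a b '' T) ↔
      Fin.last n ∈ T ∨ hypInter a b (Fin.castSucc ⁻¹' T) = ∅ := by
  by_cases hT : Fin.last n ∈ T
  · simpa [hT] using subset_span (R := K) (Set.mem_image_of_mem (coneRow a b) hT)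
  · have hTs : Fin.castSucc '' (Fin.castSucc ⁻¹' T) = T := by
      refine Set.image_preimage_eq_of_subset fun i hi => ?_
      induction i using Fin.lastCases with
      | last => exact absurd hi hT
      | cast i => exact ⟨i, rfl⟩
    rw [← Set.not_nonempty_iff_eq_empty, hypInter_nonempty_iff, hTs]
    simp [hT]

theorem coneRank_eq (T : Set (Fin (n + 1))) :
    coneRank a b T = finrank K (span K (a '' (Fin.castSucc ⁻¹' T))) +
      if Fin.last n ∈ T ∨ hypInter a b (Fin.castSucc ⁻¹' T) = ∅ then 1 else 0 := by
  rw [coneRank, ← finrank_map_add_finrank_inf_ker (Fin.initLinearMap K l),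
    map_initLinearMap_span_coneRow, Fin.ker_initLinearMap]
  congr 1
  by_cases h : Pi.single (Fin.last l) (1 : K) ∈ span K (coneRow a b '' T)
  · rw [if_pos ((single_last_mem_span_coneRow_iff a b T).mp h),
      inf_eq_right.mpr ((span_singleton_le_iff_mem _ _).mpr h)]
    exact finrank_span_singleton (by simp)
  · rw [if_neg (mt (single_last_mem_span_coneRow_iff a b T).mpr h),
      (disjoint_span_singleton_of_notMem h).eq_bot, finrank_bot]

theorem coneRank_image_castSucc (s : Set (Fin n)) :
    coneRank a b (Fin.castSucc '' s) =
      finrank K (span K (a '' s)) + if hypInter a b s = ∅ then 1 else 0 := by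
  rw [coneRank_eq, (Fin.castSucc_injective n).preimage_image]
  simp

theorem coneRank_insert_last_image_castSucc (s : Set (Fin n)) :
    coneRank a b (insert (Fin.last n) (Fin.castSucc '' s)) = finrank K (span K (a '' s)) + 1 := by
  have hs : Fin.castSucc ⁻¹' insert (Fin.last n) (Fin.castSucc '' s) = s := by
    ext i
    simp [(Fin.castSucc_lt_last i).ne]
  rw [coneRank_eq, hs]
  simp

theorem adim_hypInter_of_nonempty {s : Set (Fin n)} (hne : (hypInter a b s).Nonempty) :
    adim K (hypInter a b s) = l - finrank K (span K (a '' s)) := by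
  obtain ⟨x₀, hx₀⟩ := hne
  let M : Matrix s (Fin l) K := Matrix.of fun i => a i
  have hX : hypInter a b s = AffineSubspace.mk' x₀ (LinearMap.ker M.mulVecLin) := by
    ext x
    rw [SetLike.mem_coe, AffineSubspace.mem_mk', LinearMap.mem_ker, Matrix.mulVecLin_apply,
      funext_iff, mem_hypInter]
    simp [M, Matrix.mulVec, vsub_eq_sub, dotProduct_sub, (mem_hypInter a b).mp hx₀, sub_eq_zero]
  have hrank : finrank K (span K (a '' s)) + finrank K (LinearMap.ker M.mulVecLin) = l := by
    have h := LinearMap.finrank_range_add_finrank_ker M.mulVecLin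
    rwa [← Matrix.rank, Matrix.rank_eq_finrank_span_row, Module.finrank_fin_fun,
      show Set.range M.row = a '' s from (Set.image_eq_range a s).symm] at h
  rw [adim, if_neg (Set.nonempty_iff_ne_empty.mp ⟨x₀, hx₀⟩), hX, AffineSubspace.affineSpan_coe,
    AffineSubspace.direction_mk']
  omega

theorem adim_hypInter_eq_ite_coneRank (s : Set (Fin n)) :
    adim K (hypInter a b s) =
      if coneRank a b (Fin.castSucc '' s) = coneRank a b (insert (Fin.last n) (Fin.castSucc '' s))
      then -1 else (l + 1 : ℤ) - coneRank a b (insert (Fin.last n) (Fin.castSucc '' s)) := by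
  rw [coneRank_image_castSucc, coneRank_insert_last_image_castSucc]
  by_cases h : hypInter a b s = ∅
  · rw [if_pos h, if_pos rfl]
    exact (adim_eq_neg_one_iff _).mpr h
  · rw [if_neg h, if_neg (by omega),
      adim_hypInter_of_nonempty a b (Set.nonempty_iff_ne_empty.mpr h)]
    push_cast
    ring

theorem span_range_coneRow_eq_top {s : Set (Fin n)} {x : Fin l → K}
    (hx : hypInter a b s = {x}) : span K (Set.range (coneRow a b)) = ⊤ := by
  have hs : finrank K (span K (a '' s)) = l := by
    have h := adim_hypInter_of_nonempty a b (hx ▸ Set.singleton_nonempty x)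
    rw [hx, adim_singleton] at h
    have := finrank_le (span K (a '' s))
    rw [finrank_fin_fun] at this
    omega
  have hle : l ≤ finrank K (span K (a '' Set.univ)) :=
    hs.symm.trans_le (finrank_mono (span_mono (Set.image_mono (Set.subset_univ s))))
  have huniv := coneRank_eq a b Set.univ
  rw [coneRank, Set.image_univ, Set.preimage_univ, if_pos (Or.inl (Set.mem_univ _))] at huniv
  apply eq_top_of_finrank_eq
  have := finrank_le (span K (Set.range (coneRow a b)))
  rw [finrank_fin_fun] at this ⊢
  omega

end OneField

section TwoFields

variable {K₁ K₂ : Type*} [Field K₁] [Field K₂] {l n : ℕ}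
  {a₁ : Fin n → Fin l → K₁} {b₁ : Fin n → K₁} {a₂ : Fin n → Fin l → K₂} {b₂ : Fin n → K₂}

theorem combEquiv_iff_forall_adim_hypInter_eq :
    CombEquiv K₁ K₂ a₁ b₁ a₂ b₂ ↔ ∀ s, adim K₁ (hypInter a₁ b₁ s) = adim K₂ (hypInter a₂ b₂ s) := by
  simp only [CombEquiv, iInter_hypSet_eq_hypInter_range]
  refine ⟨fun h s => ?_, fun h k t _ => h _⟩
  obtain ⟨t, ht, hts⟩ := Set.exists_strictMono_fin_range_eq (rfl : s.ncard = s.ncard)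
  rw [← hts]
  exact h _ t ht

theorem coneRank_le_of_Ibar_eq (h : Ibar K₁ a₁ b₁ = Ibar K₂ a₂ b₂)
    (hspan : span K₁ (Set.range (coneRow a₁ b₁)) = ⊤) (T : Set (Fin (n + 1))) :
    coneRank a₁ b₁ T ≤ coneRank a₂ b₂ T := by
  refine finrank_span_image_le_of_forall_basis hspan (fun U hU hcard => ?_) T
  rw [finrank_fin_fun K₁] at hcard
  rw [linearIndepOn_iff_ncard_eq_finrank_span U.toFinite] at hU ⊢
  obtain ⟨t, ht, rfl⟩ := Set.exists_strictMono_fin_range_eq hcard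
  have hmem := congrArg (t ∈ ·) h
  simp only [mem_Ibar_iff, ht, true_and, eq_iff_iff, not_iff_not] at hmem
  rw [hcard] at hU ⊢
  exact (hmem.mp hU.symm).symm

theorem finrank_span_image_le_of_adim_hypInter_eq
    (hd : ∀ s, adim K₁ (hypInter a₁ b₁ s) = adim K₂ (hypInter a₂ b₂ s)) (s : Set (Fin n)) :
    finrank K₁ (span K₁ (a₁ '' s)) ≤ finrank K₂ (span K₂ (a₂ '' s)) := by
  obtain ⟨s', hs's, -, hss', hind⟩ :=
    exists_linearIndepOn_extension (linearIndepOn_empty K₁ a₁) (Set.empty_subset s)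
  have hcard := (linearIndepOn_iff_ncard_eq_finrank_span s'.toFinite).mp hind
  -- a system with independent rows is solvable: its cone rank cannot exceed its size
  have hne₁ : hypInter a₁ b₁ s' ≠ ∅ := by
    intro h
    have hle :=
      finrank_span_image_le_ncard (K := K₁) (coneRow a₁ b₁) (s'.toFinite.image Fin.castSucc)
    rw [← coneRank, coneRank_image_castSucc, if_pos h,
      Set.ncard_image_of_injective _ (Fin.castSucc_injective n)] at hle
    omega
  have hne₂ : hypInter a₂ b₂ s' ≠ ∅ := by
    rwa [ne_eq, ← adim_eq_neg_one_iff, ← hd, adim_eq_neg_one_iff]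
  have h := hd s'
  rw [adim_hypInter_of_nonempty a₁ b₁ (Set.nonempty_iff_ne_empty.mpr hne₁),
    adim_hypInter_of_nonempty a₂ b₂ (Set.nonempty_iff_ne_empty.mpr hne₂)] at h
  calc finrank K₁ (span K₁ (a₁ '' s))
      = finrank K₁ (span K₁ (a₁ '' s')) := by
        rw [le_antisymm (span_mono (Set.image_mono hs's)) (span_le.mpr hss')]
    _ = finrank K₂ (span K₂ (a₂ '' s')) := by omega
    _ ≤ finrank K₂ (span K₂ (a₂ '' s)) := finrank_mono (span_mono (Set.image_mono hs's))

theorem coneRank_eq_of_adim_hypInter_eq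
    (hd : ∀ s, adim K₁ (hypInter a₁ b₁ s) = adim K₂ (hypInter a₂ b₂ s)) :
    coneRank a₁ b₁ = coneRank a₂ b₂ := by
  have hrank s := le_antisymm (finrank_span_image_le_of_adim_hypInter_eq hd s)
    (finrank_span_image_le_of_adim_hypInter_eq (fun s => (hd s).symm) s)
  have hempty s : hypInter a₁ b₁ s = ∅ ↔ hypInter a₂ b₂ s = ∅ := by
    rw [← adim_eq_neg_one_iff, hd, adim_eq_neg_one_iff]
  funext T
  rw [coneRank_eq, coneRank_eq, hrank]
  simp only [hempty]

end TwoFields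

theorem stmt2_general {K₁ K₂ : Type*} [Field K₁] [Field K₂] {l n : ℕ}
    (a₁ : Fin n → Fin l → K₁) (b₁ : Fin n → K₁)
    (a₂ : Fin n → Fin l → K₂) (b₂ : Fin n → K₂)
    (hess₁ : ∃ t : Fin l → Fin n, StrictMono t ∧
        ∃ x : Fin l → K₁, (⋂ j, hypSet K₁ (a₁ (t j)) (b₁ (t j))) = {x})
    (hess₂ : ∃ t : Fin l → Fin n, StrictMono t ∧
        ∃ x : Fin l → K₂, (⋂ j, hypSet K₂ (a₂ (t j)) (b₂ (t j))) = {x}) :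
    Ibar K₁ a₁ b₁ = Ibar K₂ a₂ b₂ ↔ CombEquiv K₁ K₂ a₁ b₁ a₂ b₂ := by
  obtain ⟨t₁, -, x₁, hx₁⟩ := hess₁
  obtain ⟨t₂, -, x₂, hx₂⟩ := hess₂
  rw [iInter_hypSet_eq_hypInter_range] at hx₁ hx₂
  rw [combEquiv_iff_forall_adim_hypInter_eq]
  constructor
  · intro h s
    have hrank : coneRank a₁ b₁ = coneRank a₂ b₂ := le_antisymm
      (coneRank_le_of_Ibar_eq h (span_range_coneRow_eq_top a₁ b₁ hx₁))
      (coneRank_le_of_Ibar_eq h.symm (span_range_coneRow_eq_top a₂ b₂ hx₂))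
    rw [adim_hypInter_eq_ite_coneRank, adim_hypInter_eq_ite_coneRank, hrank]
  · intro h
    ext t
    rw [mem_Ibar_iff, mem_Ibar_iff, coneRank_eq_of_adim_hypInter_eq h]

/-- Theorem 3.3: for essential affine arrangements, `𝓘(bar 𝒜)` determines
the intersection lattice `L(𝒜)` and vice versa; i.e. two essential arrangements (over possibly
different fields) have the same `𝓘(bar ·)` if and only if they are combinatorially equivalent
(which is exactly the data of `L(·)` with its labelling). -/
theorem stmt2 {K₁ K₂ : Type*} [Field K₁] [Field K₂] {l n : ℕ}
    (a₁ : Fin n → Fin l → K₁) (b₁ : Fin n → K₁)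
    (a₂ : Fin n → Fin l → K₂) (b₂ : Fin n → K₂)
    (ha₁ : ∀ i, a₁ i ≠ 0) (ha₂ : ∀ i, a₂ i ≠ 0)
    (hess₁ : ∃ t : Fin l → Fin n, StrictMono t ∧
        ∃ x : Fin l → K₁, (⋂ j, hypSet K₁ (a₁ (t j)) (b₁ (t j))) = {x})
    (hess₂ : ∃ t : Fin l → Fin n, StrictMono t ∧
        ∃ x : Fin l → K₂, (⋂ j, hypSet K₂ (a₂ (t j)) (b₂ (t j))) = {x}) :
    Ibar K₁ a₁ b₁ = Ibar K₂ a₂ b₂ ↔ CombEquiv K₁ K₂ a₁ b₁ a₂ b₂ :=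
  stmt2_general a₁ b₁ a₂ b₂ hess₁ hess₂
end

section
/- Let α_{i_1},...,α_{i_l} be integer linear forms defining hyperplanes of a central arrangement A in Q^l, and let p be a good prime for A that is σ-lucky for the ideal I_Z = ⟨α_{i_1},...,α_{i_l}⟩ in Z[x_1,...,x_l]. Then H_{i_1} ∩ ... ∩ H_{i_l} = {0} in Q^l if and only if (H_{i_1})_p ∩ ... ∩ (H_{i_l})_p = {0} in F_p^l. -/
open MvPolynomial
open scoped Classical

/-- The leading term (exponent) `LT_σ(f)` of `f` with respect to the term ordering `σ`. -/
noncomputable def LTerm {l : ℕ} (σ : MonomialOrder (Fin l)) (f : MvPolynomial (Fin l) ℤ) :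
    Fin l →₀ ℕ :=
  σ.toSyn.symm (f.support.sup fun d => σ.toSyn d)

/-- The leading coefficient `LC_σ(f)` of `f` with respect to `σ`. -/
noncomputable def LCoef {l : ℕ} (σ : MonomialOrder (Fin l)) (f : MvPolynomial (Fin l) ℤ) : ℤ :=
  f.coeff (LTerm σ f)

/-- The leading monomial `LM_σ(f) = LC_σ(f)·LT_σ(f)` of `f`, as a polynomial. -/
noncomputable def LMon {l : ℕ} (σ : MonomialOrder (Fin l)) (f : MvPolynomial (Fin l) ℤ) :
    MvPolynomial (Fin l) ℤ :=
  monomial (LTerm σ f) (LCoef σ f)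

/-- `G` is a minimal strong `σ`-Gröbner basis of the ideal `I ⊆ ℤ[x₁,…,x_l]`. -/
def MinStrongGB {l : ℕ} (σ : MonomialOrder (Fin l)) (G : Finset (MvPolynomial (Fin l) ℤ))
    (I : Ideal (MvPolynomial (Fin l) ℤ)) : Prop :=
  (∀ g ∈ G, g ≠ 0) ∧ Ideal.span (G : Set (MvPolynomial (Fin l) ℤ)) = I ∧
  (∀ f ∈ I, f ≠ 0 → ∃ g ∈ G, LMon σ g ∣ LMon σ f) ∧
  (∀ g ∈ G, ∀ g' ∈ G, g ≠ g' → ¬ LMon σ g ∣ LMon σ g')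

/-- `p` is `σ`-lucky for `I`: it divides no leading coefficient of (any) minimal strong
`σ`-Gröbner basis of `I`. -/
def SigmaLucky {l : ℕ} (σ : MonomialOrder (Fin l)) (p : ℕ)
    (I : Ideal (MvPolynomial (Fin l) ℤ)) : Prop :=
  ∀ G : Finset (MvPolynomial (Fin l) ℤ), MinStrongGB σ G I → ∀ g ∈ G, ¬ (p : ℤ) ∣ LCoef σ g

/-- The linear form `∑ aₖ xₖ` as a polynomial in `ℤ[x₁,…,x_l]`. -/
noncomputable def intForm {l : ℕ} (a : Fin l → ℤ) : MvPolynomial (Fin l) ℤ :=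
  ∑ k, C (a k) * X k

/-- `p` is a good prime for the central arrangement with integral forms `a`:
the reduction mod `p` of `Q(𝒜) = ∏ αᵢ` is a reduced (squarefree) polynomial. -/
noncomputable def GoodPrime {l n : ℕ} (a : Fin n → Fin l → ℤ) (p : ℕ) : Prop :=
  p.Prime ∧ Squarefree (MvPolynomial.map (Int.castRingHom (ZMod p)) (∏ i, intForm (a i)))

/-- No prime number divides (all the coefficients of) any of the forms `αᵢ`. -/
def Primitive {l n : ℕ} (a : Fin n → Fin l → ℤ) : Prop :=
  ∀ (i : Fin n) (q : ℕ), q.Prime → ∃ k, ¬ (q : ℤ) ∣ a i k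

/-!
Both conditions say that the integer matrix `A` of the forms `α_{i_j}` has nonzero determinant in
the respective field, so the claim is `det A ≠ 0 ↔ p ∤ det A`, and only `→` needs an argument.
By the adjugate formula `det A · x_v ∈ I_ℤ` for every variable, so a strong `σ`-Gröbner basis of
`I_ℤ` contains an element `g_v` whose leading term is `c_v x_v`, and luckiness gives `p ∤ c_v`.
The linear part of `g_v ∈ I_ℤ` is an integral combination of the `α_{i_j}` whose coefficients vanish
`σ`-above `x_v`; these combinations form a matrix `Z A` that is triangular with diagonal `c_v`,
hence invertible modulo `p`, so `p ∤ det A`.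

Minimal strong Gröbner bases exist over any principal ideal ring: for each exponent `d` at which
the ideal of coefficients at `d` of the elements of `I` of degree `≼ d` is nonzero and strictly
larger than at all proper divisors of `d` (finitely many, by Dickson's lemma and Noetherianity),
take an element of `I` realizing a generator of that ideal.
-/
open scoped MonomialOrder

namespace MonomialOrder

variable {ι R : Type*} [CommRing R] (m : MonomialOrder ι)

theorem degree_monomial_mul_le {f : MvPolynomial ι R} {d : ι →₀ ℕ} (hf : m.degree f ≼[m] d)
    (e : ι →₀ ℕ) (c : R) : m.degree (monomial e c * f) ≼[m] e + d := by
  refine degree_mul_le.trans ?_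
  rw [map_add, map_add]
  exact add_le_add (degree_monomial_le c) hf

theorem degree_eq_single_of_le {f : MvPolynomial ι R} (hf0 : f ≠ 0) (hf : constantCoeff f = 0)
    {v : ι} (hle : m.degree f ≤ Finsupp.single v 1) : m.degree f = Finsupp.single v 1 := by
  have hsingle : m.degree f = Finsupp.single v (m.degree f v) :=
    Finsupp.support_subset_singleton.mp
      ((Finsupp.support_mono hle).trans Finsupp.support_single_subset)
  have hv : m.degree f v ≤ 1 := by simpa using hle v
  interval_cases h : m.degree f v
  · rw [Finsupp.single_zero] at hsingle
    refine absurd ?_ ((leadingCoeff_ne_zero_iff (m := m)).mpr hf0)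
    rwa [leadingCoeff, hsingle]
  · exact hsingle

variable {m} in
theorem span_eq_of_forall_leadingTerm_dvd {I : Ideal (MvPolynomial ι R)}
    {G : Set (MvPolynomial ι R)} (hGI : G ⊆ I)
    (hG : ∀ f ∈ I, f ≠ 0 → ∃ g ∈ G, m.leadingTerm g ∣ m.leadingTerm f) :
    Ideal.span G = I := by
  refine le_antisymm (Ideal.span_le.mpr hGI) fun f hf => ?_
  induction hd : m.toSyn (m.degree f) using WellFoundedLT.induction generalizing f with
  | _ b ih =>
    by_cases hf0 : f = 0
    · simp [hf0]
    obtain ⟨g, hgG, hdvd⟩ := hG f hf hf0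
    obtain ⟨hc0 | hle, q, hq⟩ := monomial_dvd_monomial.mp hdvd
    · exact absurd hc0 (leadingCoeff_ne_zero_iff.mpr hf0)
    set u := monomial (m.degree f - m.degree g) q * g
    have hu : u ∈ I := I.mul_mem_left _ (hGI hgG)
    have huG : u ∈ Ideal.span G := Ideal.mul_mem_left _ _ (Ideal.subset_span hgG)
    have hcoeff : (f - u).coeff (m.degree f) = 0 := by
      rw [coeff_sub, ← tsub_add_cancel_of_le hle, coeff_monomial_mul, tsub_add_cancel_of_le hle]
      exact sub_eq_zero.mpr (hq.trans (mul_comm _ _))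
    by_cases hfu : f - u = 0
    · rwa [sub_eq_zero.mp hfu]
    have hdeg : m.degree (f - u) ≼[m] m.degree f := by
      refine degree_sub_le.trans (sup_le le_rfl ?_)
      simpa [u, tsub_add_cancel_of_le hle] using
        m.degree_monomial_mul_le (f := g) le_rfl (m.degree f - m.degree g) q
    have hlt : m.toSyn (m.degree (f - u)) < b := hd ▸ hdeg.lt_of_ne fun h => by
      rw [← m.toSyn.injective h] at hcoeff
      exact coeff_degree_ne_zero_iff.mpr hfu hcoeff
    simpa using Ideal.add_mem _ (ih _ hlt _ (I.sub_mem hf hu) rfl) huG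

def leadingCoeffIdeal (I : Ideal (MvPolynomial ι R)) (d : ι →₀ ℕ) : Ideal R where
  carrier := {c | ∃ f ∈ I, m.degree f ≼[m] d ∧ f.coeff d = c}
  add_mem' := by
    rintro _ _ ⟨f, hfI, hfd, rfl⟩ ⟨g, hgI, hgd, rfl⟩
    exact ⟨f + g, I.add_mem hfI hgI, degree_add_le.trans (sup_le hfd hgd), coeff_add d f g⟩
  zero_mem' := ⟨0, I.zero_mem, by simp, coeff_zero d⟩
  smul_mem' := by
    rintro c _ ⟨f, hfI, hfd, rfl⟩
    refine ⟨c • f, I.smul_of_tower_mem c hfI, degree_smul_le.trans hfd, coeff_smul d c f⟩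

variable {m}

theorem mem_leadingCoeffIdeal {I : Ideal (MvPolynomial ι R)} {d : ι →₀ ℕ} {c : R} :
    c ∈ m.leadingCoeffIdeal I d ↔ ∃ f ∈ I, m.degree f ≼[m] d ∧ f.coeff d = c :=
  Iff.rfl

theorem leadingCoeff_mem_leadingCoeffIdeal {I : Ideal (MvPolynomial ι R)}
    {f : MvPolynomial ι R} (hf : f ∈ I) : m.leadingCoeff f ∈ m.leadingCoeffIdeal I (m.degree f) :=
  ⟨f, hf, le_rfl, rfl⟩

theorem leadingCoeffIdeal_mono (I : Ideal (MvPolynomial ι R)) {d d' : ι →₀ ℕ} (h : d' ≤ d) :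
    m.leadingCoeffIdeal I d' ≤ m.leadingCoeffIdeal I d := by
  rintro _ ⟨f, hfI, hfd, rfl⟩
  refine ⟨monomial (d - d') 1 * f, I.mul_mem_left _ hfI, ?_, ?_⟩
  · simpa [tsub_add_cancel_of_le h] using m.degree_monomial_mul_le hfd (d - d') (1 : R)
  · simpa [tsub_add_cancel_of_le h] using coeff_monomial_mul d' (d - d') (1 : R) f

variable (m)

def jumpExponents (I : Ideal (MvPolynomial ι R)) : Set (ι →₀ ℕ) :=
  {d | m.leadingCoeffIdeal I d ≠ ⊥ ∧ ∀ d' < d, m.leadingCoeffIdeal I d' ≠ m.leadingCoeffIdeal I d}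

variable {m}

theorem exists_mem_jumpExponents_le {I : Ideal (MvPolynomial ι R)} {d : ι →₀ ℕ}
    (hd : m.leadingCoeffIdeal I d ≠ ⊥) :
    ∃ s ∈ m.jumpExponents I, s ≤ d ∧ m.leadingCoeffIdeal I s = m.leadingCoeffIdeal I d := by
  induction d using WellFoundedLT.induction with
  | _ d ih =>
    by_cases hjump : d ∈ m.jumpExponents I
    · exact ⟨d, hjump, le_rfl, rfl⟩
    · obtain ⟨d', hd'd, heq⟩ : ∃ d' < d, m.leadingCoeffIdeal I d' = m.leadingCoeffIdeal I d := by
        by_contra! h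
        exact hjump ⟨hd, h⟩
      obtain ⟨s, hs, hsd', hseq⟩ := ih d' hd'd (heq ▸ hd)
      exact ⟨s, hs, hsd'.trans hd'd.le, hseq.trans heq⟩

theorem jumpExponents_finite [Finite ι] [IsNoetherianRing R] (I : Ideal (MvPolynomial ι R)) :
    (m.jumpExponents I).Finite := by
  by_contra hinf
  let e := Set.Infinite.natEmbedding _ hinf
  obtain ⟨g, hg⟩ := (Set.isPWO_of_wellQuasiOrderedLE Set.univ).exists_monotone_subseq
    (f := fun n => (e n : ι →₀ ℕ)) fun _ => Set.mem_univ _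
  obtain ⟨N, hN⟩ := monotone_stabilizes_iff_noetherian.mpr inferInstance
    ⟨fun n => m.leadingCoeffIdeal I (e (g n)), fun _ _ h => leadingCoeffIdeal_mono I (hg h)⟩
  have hlt : (e (g N) : ι →₀ ℕ) < e (g (N + 1)) :=
    (hg N.le_succ).lt_of_ne fun h => N.succ_ne_self (g.injective (e.injective (Subtype.ext h))).symm
  exact (e (g (N + 1))).2.2 _ hlt (hN (N + 1) N.le_succ)

section PrincipalIdealRing

variable [IsPrincipalIdealRing R] (m) (I : Ideal (MvPolynomial ι R))

noncomputable abbrev leadingCoeffGen (d : ι →₀ ℕ) : R :=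
  Submodule.IsPrincipal.generator (m.leadingCoeffIdeal I d)

noncomputable def leadingCoeffGenLift (d : ι →₀ ℕ) : MvPolynomial ι R :=
  (Submodule.IsPrincipal.generator_mem (m.leadingCoeffIdeal I d)).choose

theorem leadingCoeffGenLift_spec (d : ι →₀ ℕ) :
    m.leadingCoeffGenLift I d ∈ I ∧ m.degree (m.leadingCoeffGenLift I d) ≼[m] d ∧
      (m.leadingCoeffGenLift I d).coeff d = m.leadingCoeffGen I d :=
  (Submodule.IsPrincipal.generator_mem (m.leadingCoeffIdeal I d)).choose_spec

variable {m I}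

theorem leadingCoeffGen_dvd_iff {d : ι →₀ ℕ} {c : R} :
    m.leadingCoeffGen I d ∣ c ↔ c ∈ m.leadingCoeffIdeal I d :=
  (Submodule.IsPrincipal.mem_iff_generator_dvd _).symm

theorem leadingTerm_leadingCoeffGenLift {d : ι →₀ ℕ} (hd : d ∈ m.jumpExponents I) :
    m.leadingTerm (m.leadingCoeffGenLift I d) = monomial d (m.leadingCoeffGen I d) := by
  obtain ⟨-, hdeg, hcoeff⟩ := m.leadingCoeffGenLift_spec I d
  have hgen : m.leadingCoeffGen I d ≠ 0 :=
    mt (Submodule.IsPrincipal.eq_bot_iff_generator_eq_zero _).mpr hd.1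
  have hdeg_eq : m.degree (m.leadingCoeffGenLift I d) = d :=
    m.toSyn.injective (le_antisymm hdeg (m.le_degree (mem_support_iff.mpr (hcoeff ▸ hgen))))
  rw [leadingTerm, leadingCoeff, hdeg_eq, hcoeff]

theorem leadingCoeffGenLift_ne_zero {d : ι →₀ ℕ} (hd : d ∈ m.jumpExponents I) :
    m.leadingCoeffGenLift I d ≠ 0 := by
  intro h0
  have := leadingTerm_leadingCoeffGenLift hd
  rw [h0, leadingTerm_zero, eq_comm, monomial_eq_zero,
    ← Submodule.IsPrincipal.eq_bot_iff_generator_eq_zero] at this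
  exact hd.1 this

variable [Finite ι] (m I)

noncomputable def strongBasis : Finset (MvPolynomial ι R) :=
  (m.jumpExponents_finite I).toFinset.image (m.leadingCoeffGenLift I)

variable {m I}

theorem mem_strongBasis {g : MvPolynomial ι R} :
    g ∈ m.strongBasis I ↔ ∃ d ∈ m.jumpExponents I, m.leadingCoeffGenLift I d = g := by
  simp [strongBasis]

theorem exists_mem_strongBasis_leadingTerm_dvd {f : MvPolynomial ι R} (hf : f ∈ I) (hf0 : f ≠ 0) :
    ∃ g ∈ m.strongBasis I, m.leadingTerm g ∣ m.leadingTerm f := by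
  have hlc := leadingCoeff_mem_leadingCoeffIdeal (m := m) hf
  obtain ⟨d, hd, hle, heq⟩ := exists_mem_jumpExponents_le (m := m) (I := I)
    (d := m.degree f) fun h => leadingCoeff_ne_zero_iff.mpr hf0 (by rwa [h] at hlc)
  refine ⟨_, mem_strongBasis.mpr ⟨d, hd, rfl⟩, ?_⟩
  rw [leadingTerm_leadingCoeffGenLift hd, leadingTerm]
  exact monomial_dvd_monomial.mpr ⟨Or.inr hle, leadingCoeffGen_dvd_iff.mpr (heq ▸ hlc)⟩

theorem strongBasis_subset : (m.strongBasis I : Set (MvPolynomial ι R)) ⊆ I := by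
  intro g hg
  obtain ⟨d, -, rfl⟩ := mem_strongBasis.mp hg
  exact (m.leadingCoeffGenLift_spec I d).1

theorem not_leadingTerm_dvd_of_mem_strongBasis {g g' : MvPolynomial ι R}
    (hg : g ∈ m.strongBasis I) (hg' : g' ∈ m.strongBasis I) (hne : g ≠ g') :
    ¬ m.leadingTerm g ∣ m.leadingTerm g' := by
  obtain ⟨d, hd, rfl⟩ := mem_strongBasis.mp hg
  obtain ⟨d', hd', rfl⟩ := mem_strongBasis.mp hg'
  rw [leadingTerm_leadingCoeffGenLift hd, leadingTerm_leadingCoeffGenLift hd']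
  rintro hdvd
  obtain ⟨h0 | hle, hgen⟩ := monomial_dvd_monomial.mp hdvd
  · exact hd'.1 ((Submodule.IsPrincipal.eq_bot_iff_generator_eq_zero _).mpr h0)
  have hlt : d < d' := hle.lt_of_ne fun h => hne (h ▸ rfl)
  refine hd'.2 d hlt (le_antisymm (leadingCoeffIdeal_mono I hle) fun c hc => ?_)
  exact leadingCoeffGen_dvd_iff.mp (hgen.trans (leadingCoeffGen_dvd_iff.mpr hc))

end PrincipalIdealRing

end MonomialOrder

theorem exists_minStrongGB {l : ℕ} (σ : MonomialOrder (Fin l))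
    (I : Ideal (MvPolynomial (Fin l) ℤ)) : ∃ G, MinStrongGB σ G I :=
  ⟨σ.strongBasis I,
    fun _ hg => by
      obtain ⟨d, hd, rfl⟩ := MonomialOrder.mem_strongBasis.mp hg
      exact MonomialOrder.leadingCoeffGenLift_ne_zero hd,
    MonomialOrder.span_eq_of_forall_leadingTerm_dvd MonomialOrder.strongBasis_subset
      fun _ => MonomialOrder.exists_mem_strongBasis_leadingTerm_dvd,
    fun _ => MonomialOrder.exists_mem_strongBasis_leadingTerm_dvd,
    fun _ hg _ hg' => MonomialOrder.not_leadingTerm_dvd_of_mem_strongBasis hg hg'⟩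

section LinearForms

variable {l : ℕ}

theorem coeff_single_mul_intForm (c : MvPolynomial (Fin l) ℤ) (w : Fin l → ℤ) (u : Fin l) :
    (c * intForm w).coeff (Finsupp.single u 1) = constantCoeff c * w u := by
  rw [intForm, Finset.mul_sum, coeff_sum, Finset.sum_eq_single u]
  · rw [mul_left_comm, coeff_C_mul, coeff_mul_X', if_pos (by simp), tsub_self, mul_comm]
    rfl
  · intro k _ hk
    rw [mul_left_comm, coeff_C_mul, coeff_mul_X', if_neg (by simp [hk]), mul_zero]
  · simp

theorem exists_coeff_single_eq_of_mem_span {κ : Type*} [Fintype κ] {b : κ → Fin l → ℤ}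
    {f : MvPolynomial (Fin l) ℤ} (hf : f ∈ Ideal.span (Set.range fun j => intForm (b j))) :
    ∃ z : κ → ℤ, ∀ u, f.coeff (Finsupp.single u 1) = ∑ j, z j * b j u := by
  obtain ⟨c, rfl⟩ := Ideal.mem_span_range_iff_exists_fun.mp hf
  exact ⟨fun j => constantCoeff (c j), fun u => by simp [coeff_sum, coeff_single_mul_intForm]⟩

theorem constantCoeff_eq_zero_of_mem_span {κ : Type*} {b : κ → Fin l → ℤ}
    {f : MvPolynomial (Fin l) ℤ} (hf : f ∈ Ideal.span (Set.range fun j => intForm (b j))) :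
    constantCoeff f = 0 := by
  refine (Ideal.span_le (I := RingHom.ker constantCoeff).mpr ?_ hf)
  rintro _ ⟨j, rfl⟩
  simp [intForm]

theorem sum_C_mul_intForm {κ : Type*} [Fintype κ] (z : κ → ℤ) (b : κ → Fin l → ℤ) :
    ∑ j, C (z j) * intForm (b j) = intForm fun k => ∑ j, z j * b j k := by
  simp only [intForm, Finset.mul_sum, map_sum, Finset.sum_mul, ← mul_assoc, ← C_mul]
  exact Finset.sum_comm

theorem monomial_det_mem_span (b : Fin l → Fin l → ℤ) (v : Fin l) :
    monomial (Finsupp.single v 1) (Matrix.of b).det ∈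
      Ideal.span (Set.range fun j => intForm (b j)) := by
  set A := Matrix.of b
  have hrow : (fun k => ∑ j, A.adjugate v j * b j k) = Pi.single v A.det := by
    funext k
    simpa [A, Matrix.mul_apply, Matrix.one_apply, Pi.single_apply, eq_comm] using
      congrFun (congrFun (Matrix.adjugate_mul A) v) k
  have hmon : intForm (Pi.single v A.det) = monomial (Finsupp.single v 1) A.det := by
    simp only [intForm, Pi.single_apply, apply_ite C, map_zero, ite_mul, zero_mul,
      Finset.sum_ite_eq', Finset.mem_univ, if_true, X, C_mul_monomial, mul_one]
  rw [← hmon, ← hrow, ← sum_C_mul_intForm]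
  exact Ideal.sum_mem _ fun j _ => Ideal.mul_mem_left _ _ (Ideal.subset_span ⟨j, rfl⟩)

end LinearForms

theorem Matrix.det_ne_zero_of_triangular {ι β K : Type*} [Fintype ι] [DecidableEq ι]
    [LinearOrder β] [CommRing K] [IsDomain K] {B : Matrix ι ι K} {r : ι → β}
    (hr : Function.Injective r) (htri : ∀ i j, r i < r j → B i j = 0) (hdiag : ∀ i, B i i ≠ 0) :
    B.det ≠ 0 := by
  intro h0
  obtain ⟨x, hx0, hBx⟩ := Matrix.exists_mulVec_eq_zero_iff.mpr h0
  obtain ⟨i, hi, hmin⟩ := (Finset.univ.filter fun i => x i ≠ 0).exists_min_image r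
    (by simpa [Finset.filter_nonempty_iff, funext_iff] using hx0)
  -- Row `i` of `B.mulVec x` only sees `x i`: the other nonzero entries of `x` lie above `i`.
  have hrow : (B.mulVec x) i = B i i * x i := by
    refine Finset.sum_eq_single i (fun j _ hji => ?_) (by simp)
    by_cases hxj : x j = 0
    · simp [hxj]
    have hlt : r i < r j :=
      (hmin j (by simpa using hxj)).lt_of_ne fun h => hji (hr h).symm
    simp [htri i j hlt]
  rw [hBx] at hrow
  exact mul_ne_zero (hdiag i) (by simpa using hi) hrow.symm

theorem iInter_hypSet_eq_zero_iff {K : Type*} [Field K] {l : ℕ} (b : Fin l → Fin l → ℤ) :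
    ⋂ j, hypSet K (fun k => (b j k : K)) 0 = {0} ↔ ((Matrix.of b).det : K) ≠ 0 := by
  have hker : ⋂ j, hypSet K (fun k => (b j k : K)) 0 =
      {x | ((Matrix.of b).map fun c => (c : K)).mulVec x = 0} := by
    ext x
    simp [hypSet, funext_iff, Matrix.mulVec, dotProduct]
  rw [hker, Int.cast_det, Ne, ← Matrix.exists_mulVec_eq_zero_iff, Set.eq_singleton_iff_unique_mem]
  simp [not_imp_not]

theorem exists_pivot_of_sigmaLucky {l : ℕ} (b : Fin l → Fin l → ℤ) (σ : MonomialOrder (Fin l))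
    {p : ℕ} (hdet : (Matrix.of b).det ≠ 0)
    (hlucky : SigmaLucky σ p (Ideal.span (Set.range fun j => intForm (b j)))) (v : Fin l) :
    ∃ g ∈ Ideal.span (Set.range fun j => intForm (b j)),
      σ.degree g = Finsupp.single v 1 ∧ ¬ (p : ℤ) ∣ σ.leadingCoeff g := by
  obtain ⟨G, hG⟩ := exists_minStrongGB σ (Ideal.span (Set.range fun j => intForm (b j)))
  obtain ⟨g, hgG, hdvd⟩ := hG.2.2.1 _ (monomial_det_mem_span b v) (by simpa using hdet)
  have hgI := hG.2.1 ▸ Ideal.subset_span hgG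
  change σ.leadingTerm g ∣ σ.leadingTerm _ at hdvd
  rw [σ.leadingTerm_monomial] at hdvd
  obtain ⟨h0 | hle, -⟩ := monomial_dvd_monomial.mp hdvd
  · exact absurd h0 hdet
  exact ⟨g, hgI,
    σ.degree_eq_single_of_le (hG.1 g hgG) (constantCoeff_eq_zero_of_mem_span hgI) hle,
    hlucky G hG g hgG⟩

theorem not_dvd_det_of_sigmaLucky {l : ℕ} (b : Fin l → Fin l → ℤ) (σ : MonomialOrder (Fin l))
    {p : ℕ} [Fact p.Prime] (hdet : (Matrix.of b).det ≠ 0)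
    (hlucky : SigmaLucky σ p (Ideal.span (Set.range fun j => intForm (b j)))) :
    ¬ (p : ℤ) ∣ (Matrix.of b).det := by
  choose g hgI hgdeg hgp using exists_pivot_of_sigmaLucky b σ hdet hlucky
  choose z hz using fun v => exists_coeff_single_eq_of_mem_span (hgI v)
  set B : Matrix (Fin l) (Fin l) (ZMod p) :=
    Matrix.of fun v u => (((g v).coeff (Finsupp.single u 1) : ℤ) : ZMod p)
  have hB : B = (Matrix.of z).map (Int.cast : ℤ → ZMod p) * (Matrix.of b).map Int.cast := by
    ext v u
    simp [B, hz, Matrix.mul_apply]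
  have hBdet : B.det ≠ 0 := by
    refine Matrix.det_ne_zero_of_triangular (r := fun u => σ.toSyn (Finsupp.single u 1)) ?_ ?_ ?_
    · exact fun u v h => Finsupp.single_left_injective one_ne_zero (σ.toSyn.injective h)
    · intro v u hlt
      simp [B, σ.coeff_eq_zero_of_lt (hgdeg v ▸ hlt)]
    · intro v
      simpa [B, ZMod.intCast_zmod_eq_zero_iff_dvd, MonomialOrder.leadingCoeff, ← hgdeg v]
        using hgp v
  rw [hB, Matrix.det_mul] at hBdet
  intro hp
  refine hBdet (mul_eq_zero_of_right _ ?_)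
  exact (Int.cast_det _).symm.trans ((ZMod.intCast_zmod_eq_zero_iff_dvd _ p).mpr hp)

theorem stmt7_general {l n : ℕ} (a : Fin n → Fin l → ℤ)
    (t : Fin l → Fin n)
    (σ : MonomialOrder (Fin l)) (p : ℕ) (hgood : GoodPrime a p)
    (hlucky : SigmaLucky σ p (Ideal.span (Set.range fun j => intForm (a (t j))))) :
    (⋂ j, hypSet ℚ (fun k => (a (t j) k : ℚ)) 0) = {0} ↔
      (⋂ j, hypSet (ZMod p) (fun k => (a (t j) k : ZMod p)) 0) = {0} := by
  have : Fact p.Prime := ⟨hgood.1⟩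
  rw [iInter_hypSet_eq_zero_iff (K := ℚ) (fun j k => a (t j) k),
    iInter_hypSet_eq_zero_iff (K := ZMod p) (fun j k => a (t j) k), Int.cast_ne_zero, ne_eq, ne_eq,
    ZMod.intCast_zmod_eq_zero_iff_dvd]
  exact ⟨fun hdet => not_dvd_det_of_sigmaLucky _ σ hdet hlucky,
    fun hndvd hdet => hndvd (hdet ▸ dvd_zero _)⟩

/-- Proposition 4.12: let `α_{i₁},…,α_{i_l}` be `l` of the integral forms of
a central arrangement `𝒜` over `ℚ`, and `p` a good prime for `𝒜` which is `σ`-lucky for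
`I_ℤ = ⟨α_{i₁},…,α_{i_l}⟩_ℤ`. Then the hyperplanes meet only at `0` over `ℚ` iff their
reductions meet only at `0` over `𝔽_p`. -/
theorem stmt7 {l n : ℕ} (a : Fin n → Fin l → ℤ) (hprim : Primitive a)
    (t : Fin l → Fin n) (ht : StrictMono t)
    (σ : MonomialOrder (Fin l)) (p : ℕ) (hgood : GoodPrime a p)
    (hlucky : SigmaLucky σ p (Ideal.span (Set.range fun j => intForm (a (t j))))) :
    (⋂ j, hypSet ℚ (fun k => (a (t j) k : ℚ)) 0) = {0} ↔
      (⋂ j, hypSet (ZMod p) (fun k => (a (t j) k : ZMod p)) 0) = {0} :=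
  stmt7_general a t σ p hgood hlucky
end

section
/- Let A be a central essential arrangement in Q^l with integer coefficient matrix. If a prime p is not (σ,l)-lucky for A, then p divides the lcm-period ρ_0 of A. -/
open MvPolynomial
open scoped Classical

/-- `𝔉(𝒜)`: increasing `l`-tuples of indices whose hyperplanes intersect in dimension `0`. -/
noncomputable def Frak (K : Type*) [CommRing K] {l n : ℕ} (a : Fin n → Fin l → K) :
    Set (Fin l → Fin n) :=
  {t | StrictMono t ∧ adim K (⋂ j, hypSet K (a (t j)) 0) = 0}

/-- `p` is `(σ,κ)`-lucky for the arrangement with forms `a`: `p` is `σ`-lucky for every ideal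
`⟨α_{i₁},…,α_{i_κ}⟩_ℤ` with `codim(H_{i₁} ∩ ⋯ ∩ H_{i_κ}) = κ`. -/
noncomputable def SigmaKLucky {l n : ℕ} (σ : MonomialOrder (Fin l)) (a : Fin n → Fin l → ℤ)
    (κ p : ℕ) : Prop :=
  ∀ t : Fin κ → Fin n, StrictMono t →
    adim ℚ (⋂ j, hypSet ℚ (fun k => (a (t j) k : ℚ)) 0) = (l : ℤ) - κ →
    SigmaLucky σ p (Ideal.span (Set.range fun j => intForm (a (t j))))

/-- The `l × n` coefficient matrix `C` of the arrangement, `C k i = aᵢₖ`. -/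
def coefMatrix {l n : ℕ} (a : Fin n → Fin l → ℤ) : Matrix (Fin l) (Fin n) ℤ :=
  Matrix.of fun k i => a i k

/-- The submatrix `C_J` of the columns of `C` indexed by `J` (in increasing order). -/
def colSub {l n : ℕ} (C : Matrix (Fin l) (Fin n) ℤ) (J : Finset (Fin n)) :
    Matrix (Fin l) (Fin J.card) ℤ :=
  Matrix.of fun k j => C k ((J.orderIsoOfFin rfl j : Fin n))

/-- `diag(e 0, …, e (r-1))` padded with zeros is the Smith normal form of `M`:
there are unimodular `S`, `T` with `S M T` the padded diagonal matrix, the diagonal entries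
being positive and satisfying the divisibility chain. -/
def IsSmithOf {l κ : ℕ} (M : Matrix (Fin l) (Fin κ) ℤ) (e : ℕ → ℤ) (r : ℕ) : Prop :=
  ∃ S : Matrix (Fin l) (Fin l) ℤ, ∃ T : Matrix (Fin κ) (Fin κ) ℤ,
    IsUnit S.det ∧ IsUnit T.det ∧
    (∀ i j, (S * M * T) i j = if (i : ℕ) = (j : ℕ) ∧ (i : ℕ) < r then e (i : ℕ) else 0) ∧
    (∀ m, m < r → 0 < e m) ∧ (∀ m, m + 1 < r → e m ∣ e (m + 1))

/-- `d` is the largest elementary divisor `e(J)` of the (nonzero) integer matrix `M`. -/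
def LargestElemDiv {l κ : ℕ} (M : Matrix (Fin l) (Fin κ) ℤ) (d : ℤ) : Prop :=
  ∃ (r : ℕ) (e : ℕ → ℤ), IsSmithOf M e r ∧ 0 < r ∧ d = e (r - 1)

/-!
If `p` divides `LC(g)` for some `g` in a minimal strong Gröbner basis of
`I = ⟨α_{t₁},…,α_{t_l}⟩_ℤ`, it suffices to show `LC(g) ∣ e(J)` for `J = {t₁,…,t_l}`, since
`e(J) ∣ ρ₀`. As the hyperplanes meet only at the origin, `C_J` has trivial left kernel, so its
Smith normal form has full rank and `e(J) • ℤ^l` lies in the column lattice of `C_J`: every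
`e(J) xₖ` lies in `I`, hence so does `e(J) x^β` for `β = LT(g)`, which is not `0` because `I`
contains no constants. A Bézout combination of `e(J) x^β` and `g` has leading monomial
`gcd(e(J), LC(g)) x^β`, and minimality of the basis forces `LC(g) ∣ gcd(e(J), LC(g))`.
-/

theorem MonomialOrder.degree_eq_of_coeff_ne_zero {ι R : Type*} [CommSemiring R]
    (m : MonomialOrder ι) {f : MvPolynomial ι R} {β : ι →₀ ℕ} (hβ : f.coeff β ≠ 0)
    (hle : m.toSyn (m.degree f) ≤ m.toSyn β) : m.degree f = β :=
  m.toSyn.injective (le_antisymm hle (m.le_degree (mem_support_iff.mpr hβ)))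

section LeadingTerms

variable {l : ℕ} (σ : MonomialOrder (Fin l))

theorem LTerm_eq_degree (f : MvPolynomial (Fin l) ℤ) : LTerm σ f = σ.degree f := rfl

theorem MinStrongGB.lcoef_dvd {G : Finset (MvPolynomial (Fin l) ℤ)}
    {I : Ideal (MvPolynomial (Fin l) ℤ)} (hG : MinStrongGB σ G I) {g : MvPolynomial (Fin l) ℤ}
    (hg : g ∈ G) {m : ℤ} (hm : m ≠ 0) (hmon : monomial (LTerm σ g) m ∈ I) :
    LCoef σ g ∣ m := by
  obtain ⟨-, hspan, hstrong, hmin⟩ := hG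
  set β := LTerm σ g
  set c := LCoef σ g
  set d : ℤ := (Int.gcd m c : ℤ)
  have hd0 : d ≠ 0 := Int.natCast_ne_zero.mpr (Int.gcd_ne_zero_left hm)
  set f := C (Int.gcdA m c) * monomial β m + C (Int.gcdB m c) * g
  have hfI : f ∈ I := by
    have hgI : g ∈ I := hspan ▸ Ideal.subset_span hg
    exact I.add_mem (I.mul_mem_left _ hmon) (I.mul_mem_left _ hgI)
  have hbez : d = m * m.gcdA c + c * m.gcdB c := Int.gcd_eq_gcd_ab m c
  have hcoeff : f.coeff β = d := by
    rw [hbez]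
    simp only [f, coeff_add, coeff_C_mul, coeff_monomial, if_true]
    change _ + _ * c = _
    ring
  have hdeg : σ.degree f = β := by
    refine σ.degree_eq_of_coeff_ne_zero (hcoeff ▸ hd0) ?_
    refine σ.degree_add_le.trans (sup_le ?_ ?_)
    · rw [C_mul_monomial]
      exact σ.degree_monomial_le _
    · rw [← smul_eq_C_mul]
      exact σ.degree_smul_le
  have hLMf : LMon σ f = monomial β d := by
    rw [LMon, LCoef, LTerm_eq_degree, hdeg, hcoeff]
  obtain ⟨g', hg', hdvd⟩ := hstrong f hfI fun h => hd0 (by rw [← hcoeff, h, coeff_zero])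
  rw [hLMf] at hdvd
  have hc'd : LCoef σ g' ∣ d := (monomial_dvd_monomial.mp hdvd).2
  have hg'g : g' = g := by
    by_contra hne
    refine hmin g' hg' g hg hne (hdvd.trans ?_)
    exact monomial_dvd_monomial.mpr ⟨Or.inr le_rfl, Int.gcd_dvd_right _ _⟩
  subst hg'g
  exact hc'd.trans (Int.gcd_dvd_left _ _)

end LeadingTerms

section LinearForms

variable {l : ℕ}

theorem intForm_add (a b : Fin l → ℤ) : intForm (a + b) = intForm a + intForm b := by
  simp only [intForm, Pi.add_apply, map_add, add_mul, Finset.sum_add_distrib]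

theorem intForm_smul (c : ℤ) (a : Fin l → ℤ) : intForm (c • a) = C c * intForm a := by
  simp only [intForm, Pi.smul_apply, smul_eq_mul, map_mul, Finset.mul_sum, mul_assoc]

theorem intForm_single (k : Fin l) (c : ℤ) : intForm (Pi.single k c) = C c * X k := by
  rw [intForm, Finset.sum_eq_single k (fun j _ hj => by simp [hj]) (by simp)]
  simp

theorem constantCoeff_intForm (a : Fin l → ℤ) : constantCoeff (intForm a) = 0 := by
  simp [intForm]

theorem intForm_mem_span {s : Set (Fin l → ℤ)} {z : Fin l → ℤ}
    (hz : z ∈ Submodule.span ℤ s) : intForm z ∈ Ideal.span (intForm '' s) := by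
  induction hz using Submodule.span_induction with
  | mem x hx => exact Ideal.subset_span (Set.mem_image_of_mem _ hx)
  | zero => simp [intForm]
  | add x y _ _ hx hy => rw [intForm_add]; exact Ideal.add_mem _ hx hy
  | smul c x _ hx => rw [intForm_smul]; exact Ideal.mul_mem_left _ _ hx

theorem constantCoeff_eq_zero_of_mem_span_intForm {ι : Type*} {b : ι → Fin l → ℤ}
    {f : MvPolynomial (Fin l) ℤ} (hf : f ∈ Ideal.span (Set.range fun j => intForm (b j))) :
    constantCoeff f = 0 := by
  suffices h : Ideal.span (Set.range fun j => intForm (b j)) ≤ RingHom.ker constantCoeff from h hf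
  rw [Ideal.span_le]
  rintro _ ⟨j, rfl⟩
  exact constantCoeff_intForm (b j)

theorem degree_ne_zero_of_mem_span_intForm (σ : MonomialOrder (Fin l)) {ι : Type*}
    {b : ι → Fin l → ℤ} {f : MvPolynomial (Fin l) ℤ}
    (hf : f ∈ Ideal.span (Set.range fun j => intForm (b j))) (hf0 : f ≠ 0) :
    σ.degree f ≠ 0 := by
  intro hdeg
  have := (σ.degree_mem_support_iff f).mpr hf0
  rw [hdeg, mem_support_iff, ← constantCoeff_eq] at this
  exact this (constantCoeff_eq_zero_of_mem_span_intForm hf)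

end LinearForms

theorem monomial_mem_of_C_mul_X_mem {ι R : Type*} [CommSemiring R]
    {I : Ideal (MvPolynomial ι R)} {m : R} {k : ι} (hk : C m * X k ∈ I) {β : ι →₀ ℕ}
    (hβ : β k ≠ 0) : monomial β m ∈ I := by
  have hle : Finsupp.single k 1 ≤ β := Finsupp.single_le_iff.mpr (Nat.one_le_iff_ne_zero.mpr hβ)
  have hfac : monomial β m = monomial (β - Finsupp.single k 1) 1 * (C m * X k) := by
    rw [C_mul_X_eq_monomial, monomial_mul, one_mul, tsub_add_cancel_of_le hle]
  rw [hfac]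
  exact I.mul_mem_left _ hk

section Smith

open Matrix

variable {l κ : ℕ} {M : Matrix (Fin l) (Fin κ) ℤ} {e : ℕ → ℤ} {r : ℕ}

theorem IsSmithOf.dvd_of_le (h : IsSmithOf M e r) {i j : ℕ} (hij : i ≤ j) (hj : j < r) :
    e i ∣ e j := by
  obtain ⟨-, -, -, -, -, -, hchain⟩ := h
  induction j, hij using Nat.le_induction with
  | base => exact dvd_rfl
  | succ j _ ih => exact (ih (by omega)).trans (hchain j hj)

/-- A row of `S * M * T` without a diagonal entry is zero, which would put the corresponding row
of the unimodular `S` in the left kernel of `M`. -/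
theorem IsSmithOf.exists_diag (h : IsSmithOf M e r) (hker : ∀ x, x ᵥ* M = 0 → x = 0)
    (i : Fin l) : ∃ j : Fin κ, (i : ℕ) = j ∧ (i : ℕ) < r := by
  obtain ⟨S, T, hS, hT, hD, -, -⟩ := h
  by_contra! hrow
  have hzero : (S * M * T) i = 0 := funext fun j => by
    rw [hD, if_neg fun hj => (hrow j hj.1).not_gt hj.2]
    rfl
  have hSi : S i ᵥ* M = 0 := by
    have := congrArg (· ᵥ* T⁻¹) hzero
    simpa [mul_apply_eq_vecMul, vecMul_vecMul, Matrix.mul_assoc, mul_nonsing_inv _ hT] using this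
  have hdet : S.det = 0 := det_eq_zero_of_row_eq_zero i (congrFun (hker _ hSi))
  exact not_isUnit_zero (hdet ▸ hS)

theorem IsSmithOf.exists_mulVec_eq_smul (h : IsSmithOf M e r) (hker : ∀ x, x ᵥ* M = 0 → x = 0)
    {d : ℤ} (hd : ∀ i < r, e i ∣ d) (z : Fin l → ℤ) : ∃ u, M *ᵥ u = d • z := by
  have hdiag := h.exists_diag hker
  obtain ⟨S, T, hS, hT, hD, -, -⟩ := h
  choose jOf hjOf hlt using hdiag
  choose c hc using fun i : Fin l => hd i (hlt i)
  set w := S *ᵥ z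
  set v : Fin κ → ℤ := fun j => if hj : (j : ℕ) < l then c ⟨j, hj⟩ * w ⟨j, hj⟩ else 0
  have hDv : (S * M * T) *ᵥ v = S *ᵥ (d • z) := by
    funext i
    rw [mulVec_smul, Pi.smul_apply, mulVec, dotProduct, Finset.sum_eq_single (jOf i)]
    · have hv : v (jOf i) = c i * w i := by simp [v, ← hjOf i]
      rw [hD, if_pos ⟨hjOf i, hlt i⟩, hv, hc i, smul_eq_mul]
      ring
    · intro j _ hj
      rw [hD, if_neg, zero_mul]
      rintro ⟨hji, -⟩
      exact hj (Fin.ext ((hjOf i).symm.trans hji).symm)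
    · simp
  refine ⟨T *ᵥ v, ?_⟩
  calc M *ᵥ (T *ᵥ v) = S⁻¹ *ᵥ ((S * M * T) *ᵥ v) := by
        rw [mulVec_mulVec, mulVec_mulVec, Matrix.mul_assoc, nonsing_inv_mul_cancel_left _ _ hS]
    _ = d • z := by rw [hDv, mulVec_mulVec, nonsing_inv_mul _ hS, one_mulVec]

end Smith

theorem eq_zero_of_adim_eq_zero {K : Type*} [Field K] {l : ℕ} {S : Set (Fin l → K)}
    (hS : adim K S = 0) (h0 : (0 : Fin l → K) ∈ S) {x : Fin l → K} (hx : x ∈ S) : x = 0 := by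
  have hne : S ≠ ∅ := Set.nonempty_iff_ne_empty.mp ⟨0, h0⟩
  rw [adim, if_neg hne, Nat.cast_eq_zero, Submodule.finrank_eq_zero] at hS
  have hdir := AffineSubspace.vsub_mem_direction (subset_affineSpan K S hx)
    (subset_affineSpan K S h0)
  rwa [hS, Submodule.mem_bot, vsub_eq_sub, sub_zero] at hdir

section ColumnSubmatrix

open Matrix

variable {l n κ : ℕ} (a : Fin n → Fin l → ℤ)

theorem range_col_colSub_coefMatrix_image (t : Fin κ → Fin n) :
    Set.range (colSub (coefMatrix a) (Finset.univ.image t)).col = Set.range fun j => a (t j) := by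
  set J := Finset.univ.image t
  have hcol : (colSub (coefMatrix a) J).col = a ∘ J.orderEmbOfFin rfl := by
    funext j k
    simp [colSub, coefMatrix, Matrix.col]
  rw [hcol, Set.range_comp, Finset.range_orderEmbOfFin, Finset.coe_image, Finset.coe_univ,
    Set.image_univ, ← Set.range_comp]
  rfl

theorem eq_zero_of_vecMul_colSub_eq_zero {t : Fin κ → Fin n}
    (hdim : adim ℚ (⋂ j, hypSet ℚ (fun k => (a (t j) k : ℚ)) 0) = 0) {x : Fin l → ℤ}
    (hx : x ᵥ* colSub (coefMatrix a) (Finset.univ.image t) = 0) : x = 0 := by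
  have horth : ∀ j, x ⬝ᵥ a (t j) = 0 := by
    intro j
    obtain ⟨j', hj'⟩ : a (t j) ∈ Set.range (colSub (coefMatrix a) (Finset.univ.image t)).col := by
      rw [range_col_colSub_coefMatrix_image]
      exact ⟨j, rfl⟩
    rw [← hj']
    exact congrFun hx j'
  have hxq : (fun k => (x k : ℚ)) ∈ ⋂ j, hypSet ℚ (fun k => (a (t j) k : ℚ)) 0 := by
    refine Set.mem_iInter.mpr fun j => ?_
    have := congrArg (Int.cast : ℤ → ℚ) (horth j)
    simpa [hypSet, dotProduct, mul_comm] using this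
  have := eq_zero_of_adim_eq_zero hdim (Set.mem_iInter.mpr fun j => by simp [hypSet]) hxq
  funext k
  simpa using congrFun this k

theorem intForm_mulVec_colSub_mem (t : Fin κ → Fin n) (u : Fin (Finset.univ.image t).card → ℤ) :
    intForm (colSub (coefMatrix a) (Finset.univ.image t) *ᵥ u) ∈
      Ideal.span (Set.range fun j => intForm (a (t j))) := by
  have hu := LinearMap.mem_range_self (colSub (coefMatrix a) (Finset.univ.image t)).mulVecLin u
  rw [range_mulVecLin, range_col_colSub_coefMatrix_image] at hu
  have hmem := intForm_mem_span hu
  rwa [← Set.range_comp] at hmem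

end ColumnSubmatrix

theorem stmt15_general {l n : ℕ} (a : Fin n → Fin l → ℤ)
    (eF : Finset (Fin n) → ℤ)
    (heF : ∀ J : Finset (Fin n), J.Nonempty → J.card ≤ l →
      LargestElemDiv (colSub (coefMatrix a) J) (eF J))
    (ρ₀ : ℤ)
    (hρ : ρ₀ = ((Finset.univ : Finset (Finset (Fin n))).filter
      fun J => 1 ≤ J.card ∧ J.card ≤ l).lcm eF)
    (σ : MonomialOrder (Fin l)) (p : ℕ)
    (hbad : ¬ SigmaKLucky σ a l p) :
    (p : ℤ) ∣ ρ₀ := by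
  simp only [SigmaKLucky, SigmaLucky, sub_self, not_forall, not_not] at hbad
  obtain ⟨t, ht, hdim, G, hG, g, hg, hpg⟩ := hbad
  set I := Ideal.span (Set.range fun j => intForm (a (t j)))
  set J := Finset.univ.image t
  have hJ : J.card = l := by simp [J, Finset.card_image_of_injective _ ht.injective]
  have hgI : g ∈ I := hG.2.1 ▸ Ideal.subset_span hg
  obtain ⟨k, hk⟩ := Finsupp.ne_iff.mp (degree_ne_zero_of_mem_span_intForm σ hgI (hG.1 g hg))
  obtain ⟨r, e, hsmith, hr, he⟩ := heF J ⟨t k, by simp [J]⟩ hJ.le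
  obtain ⟨u, hu⟩ := hsmith.exists_mulVec_eq_smul (d := eF J)
    (fun _ => eq_zero_of_vecMul_colSub_eq_zero a hdim)
    (fun i hi => he ▸ hsmith.dvd_of_le (Nat.le_pred_of_lt hi) (Nat.pred_lt_of_lt hi))
    (Pi.single k 1)
  have hmon : monomial (LTerm σ g) (eF J) ∈ I := by
    refine monomial_mem_of_C_mul_X_mem ?_ hk
    have hsingle : (Pi.single k (eF J) : Fin l → ℤ) = eF J • Pi.single k 1 := by
      rw [← Pi.single_smul, smul_eq_mul, mul_one]
    rw [← intForm_single, hsingle, ← hu]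
    exact intForm_mulVec_colSub_mem a t u
  have heJ : eF J ≠ 0 := by
    obtain ⟨-, -, -, -, -, hpos, -⟩ := hsmith
    exact he ▸ (hpos _ (Nat.sub_lt hr one_pos)).ne'
  have hJρ : eF J ∣ ρ₀ :=
    hρ ▸ Finset.dvd_lcm (Finset.mem_filter.mpr ⟨Finset.mem_univ _, hJ ▸ k.pos, hJ.le⟩)
  exact hpg.trans ((hG.lcoef_dvd σ hg heJ hmon).trans hJρ)

/-- Proposition 7.5: if `p` is not `(σ,l)`-lucky for the central essential
arrangement `𝒜`, then `p` divides the lcm-period `ρ₀` of `𝒜`. -/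
theorem stmt15 {l n : ℕ} (a : Fin n → Fin l → ℤ) (hprim : Primitive a)
    (hess : (Frak ℚ (fun i k => (a i k : ℚ))).Nonempty)
    (eF : Finset (Fin n) → ℤ)
    (heF : ∀ J : Finset (Fin n), J.Nonempty → J.card ≤ l →
      LargestElemDiv (colSub (coefMatrix a) J) (eF J))
    (ρ₀ : ℤ)
    (hρ : ρ₀ = ((Finset.univ : Finset (Finset (Fin n))).filter
      fun J => 1 ≤ J.card ∧ J.card ≤ l).lcm eF)
    (σ : MonomialOrder (Fin l)) (p : ℕ) (hp : p.Prime)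
    (hbad : ¬ SigmaKLucky σ a l p) :
    (p : ℤ) ∣ ρ₀ :=
  stmt15_general a eF heF ρ₀ hρ σ p hbad
end

section
/- Let A = {H_1,...,H_n} be a central arrangement in Q^l with defining forms in Z[x_1,...,x_l], and let J = {i_1,...,i_l} be such that H_{i_1} ∩ ... ∩ H_{i_l} = {0}. If a prime p divides a leading coefficient of some element of a minimal strong σ-Gröbner basis of ⟨α_{i_1},...,α_{i_l}⟩_Z, then p divides the determinant (up to sign) of the l×l coefficient matrix C_J, equivalently p divides the product of the elementary divisors of C_J. -/
/-!
By Cramer's rule `det C_J · x_k = ∑_j adj(C_J)_{jk} α_{i_j}` lies in the ideal for every `k`,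
hence so does `det C_J · x^{LT(g)}`, since `LT(g) ≠ 0` (the forms have no constant term).
Adding a suitable multiple of it to a multiple of `g` produces an element of the ideal with the
same leading term as `g` and leading coefficient `gcd(det C_J, LC(g))`. Its leading monomial is
divisible by the leading monomial of some element of the basis, which by minimality can only be
`g` itself; so `LC(g)` divides `gcd(det C_J, LC(g))`, hence `det C_J`.
-/

open MvPolynomial
open scoped Classical

section LeadingTerm

variable {l : ℕ} (σ : MonomialOrder (Fin l))

lemma LTerm_mem_support {f : MvPolynomial (Fin l) ℤ} (hf : f ≠ 0) : LTerm σ f ∈ f.support := by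
  obtain ⟨b, hb, he⟩ :=
    Finset.exists_mem_eq_sup f.support (support_nonempty.mpr hf) (fun d => σ.toSyn d)
  rwa [LTerm, he, σ.toSyn.symm_apply_apply]

lemma LCoef_ne_zero {f : MvPolynomial (Fin l) ℤ} (hf : f ≠ 0) : LCoef σ f ≠ 0 :=
  mem_support_iff.mp (LTerm_mem_support σ hf)

lemma toSyn_le_toSyn_LTerm {f : MvPolynomial (Fin l) ℤ} {d : Fin l →₀ ℕ} (hd : d ∈ f.support) :
    σ.toSyn d ≤ σ.toSyn (LTerm σ f) := by
  rw [LTerm, σ.toSyn.apply_symm_apply]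
  exact Finset.le_sup hd

lemma LTerm_eq_of_coeff_ne_zero {f : MvPolynomial (Fin l) ℤ} {e : Fin l →₀ ℕ}
    (he : f.coeff e ≠ 0) (hle : ∀ d ∈ f.support, σ.toSyn d ≤ σ.toSyn e) : LTerm σ f = e := by
  have : f.support.sup (fun d => σ.toSyn d) = σ.toSyn e :=
    le_antisymm (Finset.sup_le hle) (Finset.le_sup (mem_support_iff.mpr he))
  rw [LTerm, this, σ.toSyn.symm_apply_apply]

lemma LTerm_ne_zero_of_constantCoeff_eq_zero {f : MvPolynomial (Fin l) ℤ} (hf : f ≠ 0)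
    (hc : constantCoeff f = 0) : LTerm σ f ≠ 0 := by
  intro h
  have := LTerm_mem_support σ hf
  rw [h, mem_support_iff, ← constantCoeff_eq] at this
  exact this hc

lemma LTerm_C_mul_add_monomial {f : MvPolynomial (Fin l) ℤ} {c w : ℤ}
    (hne : c * LCoef σ f + w ≠ 0) :
    LTerm σ (C c * f + monomial (LTerm σ f) w) = LTerm σ f ∧
      LCoef σ (C c * f + monomial (LTerm σ f) w) = c * LCoef σ f + w := by
  have hcoeff : (C c * f + monomial (LTerm σ f) w).coeff (LTerm σ f) = c * LCoef σ f + w := by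
    rw [coeff_add, coeff_C_mul, coeff_monomial, if_pos rfl, LCoef]
  have hLT : LTerm σ (C c * f + monomial (LTerm σ f) w) = LTerm σ f := by
    refine LTerm_eq_of_coeff_ne_zero σ (hcoeff ▸ hne) fun d hd => ?_
    by_cases hd' : d = LTerm σ f
    · rw [hd']
    · rw [mem_support_iff, coeff_add, coeff_C_mul, coeff_monomial, if_neg (Ne.symm hd'),
        add_zero] at hd
      exact toSyn_le_toSyn_LTerm σ (mem_support_iff.mpr (right_ne_zero_of_mul hd))
  exact ⟨hLT, by rw [LCoef, hLT, hcoeff]⟩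

end LeadingTerm

lemma Ideal.monomial_mem_of_forall_C_mul_X_mem {R : Type*} [CommSemiring R] {l : ℕ}
    {I : Ideal (MvPolynomial (Fin l) R)} {d : R} (hI : ∀ k, C d * X k ∈ I)
    {e : Fin l →₀ ℕ} (he : e ≠ 0) : monomial e d ∈ I := by
  obtain ⟨k, hk⟩ : ∃ k, e k ≠ 0 := by
    by_contra! h
    exact he (Finsupp.ext h)
  have hsplit : monomial (e - Finsupp.single k 1) 1 * (C d * X k) = monomial e d := by
    rw [X, mul_left_comm, monomial_mul, one_mul, C_mul_monomial, mul_one,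
      tsub_add_cancel_of_le (Finsupp.single_le_iff.mpr (Nat.one_le_iff_ne_zero.mpr hk))]
  exact hsplit ▸ I.mul_mem_left _ (hI k)

lemma span_intForm_le_ker_constantCoeff {l ι : ℕ} (a : Fin ι → Fin l → ℤ) :
    Ideal.span (Set.range fun j => intForm (a j)) ≤ RingHom.ker constantCoeff := by
  rw [Ideal.span_le]
  rintro _ ⟨j, rfl⟩
  simp [RingHom.mem_ker, intForm]

lemma C_det_mul_X_mem_span_intForm {l : ℕ} (M : Matrix (Fin l) (Fin l) ℤ) (k : Fin l) :
    C M.det * X k ∈ Ideal.span (Set.range fun j => intForm fun i => M i j) := by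
  have hrow : ∀ i, ∑ j, C (M.adjugate j k) * C (M i j) =
      (C ((M * M.adjugate) i k) : MvPolynomial (Fin l) ℤ) := by
    intro i
    simp only [Matrix.mul_apply, map_sum, map_mul, mul_comm]
  have hcramer : C M.det * X k = ∑ j, C (M.adjugate j k) * intForm fun i => M i j := by
    simp only [intForm, Finset.mul_sum, ← mul_assoc]
    rw [Finset.sum_comm]
    simp only [← Finset.sum_mul, hrow, Matrix.mul_adjugate, Matrix.smul_apply, Matrix.one_apply]
    simp
  rw [hcramer]
  exact Ideal.sum_mem _ fun j _ => Ideal.mul_mem_left _ _ (Ideal.subset_span ⟨j, rfl⟩)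

lemma MinStrongGB.mem_of_mem {l : ℕ} {σ : MonomialOrder (Fin l)}
    {G : Finset (MvPolynomial (Fin l) ℤ)} {I : Ideal (MvPolynomial (Fin l) ℤ)}
    (hG : MinStrongGB σ G I) {g : MvPolynomial (Fin l) ℤ} (hg : g ∈ G) : g ∈ I :=
  hG.2.1 ▸ Ideal.subset_span hg

lemma MinStrongGB.LCoef_dvd_of_monomial_mem {l : ℕ} {σ : MonomialOrder (Fin l)}
    {G : Finset (MvPolynomial (Fin l) ℤ)} {I : Ideal (MvPolynomial (Fin l) ℤ)}
    (hG : MinStrongGB σ G I) {g : MvPolynomial (Fin l) ℤ} (hg : g ∈ G) {d : ℤ}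
    (hd : monomial (LTerm σ g) d ∈ I) : LCoef σ g ∣ d := by
  have hgI := hG.mem_of_mem hg
  obtain ⟨hGne, -, hGstrong, hGmin⟩ := hG
  set u := d.gcdA (LCoef σ g)
  set v := d.gcdB (LCoef σ g)
  have hbezout : v * LCoef σ g + u * d = d.gcd (LCoef σ g) := by
    rw [Int.gcd_eq_gcd_ab]; ring
  have hgcd : (d.gcd (LCoef σ g) : ℤ) ≠ 0 := by
    simpa [Int.gcd_eq_zero_iff] using fun _ => LCoef_ne_zero σ (hGne g hg)
  obtain ⟨hLT, hLC⟩ := LTerm_C_mul_add_monomial σ (hbezout ▸ hgcd)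
  rw [hbezout] at hLC
  set f := C v * g + monomial (LTerm σ g) (u * d)
  have hfI : f ∈ I := by
    refine I.add_mem (I.mul_mem_left _ hgI) ?_
    rw [← C_mul_monomial]
    exact I.mul_mem_left _ hd
  have hf : f ≠ 0 := by
    rintro hf
    rw [hf, LCoef, coeff_zero] at hLC
    exact hgcd hLC.symm
  obtain ⟨g', hg', hdvd⟩ := hGstrong f hfI hf
  rw [LMon, LMon, hLT, hLC, monomial_dvd_monomial] at hdvd
  obtain ⟨hle, hcoeff⟩ := hdvd
  obtain rfl : g' = g := by
    by_contra hne
    refine hGmin g' hg' g hg hne (monomial_dvd_monomial.mpr ⟨?_, ?_⟩)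
    · exact Or.inr (hle.resolve_left hgcd)
    · exact hcoeff.trans (Int.gcd_dvd_right _ _)
  exact hcoeff.trans (Int.gcd_dvd_left _ _)

theorem stmt19_general {l n : ℕ} (a : Fin n → Fin l → ℤ) (t : Fin l → Fin n)
    (σ : MonomialOrder (Fin l)) (p : ℕ)
    (G : Finset (MvPolynomial (Fin l) ℤ))
    (hG : MinStrongGB σ G (Ideal.span (Set.range fun j => intForm (a (t j)))))
    (g : MvPolynomial (Fin l) ℤ) (hg : g ∈ G) (hdvd : (p : ℤ) ∣ LCoef σ g) :
    (p : ℤ) ∣ (Matrix.of fun k j => a (t j) k : Matrix (Fin l) (Fin l) ℤ).det := by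
  set M : Matrix (Fin l) (Fin l) ℤ := Matrix.of fun k j => a (t j) k
  have hLT : LTerm σ g ≠ 0 := LTerm_ne_zero_of_constantCoeff_eq_zero σ (hG.1 g hg)
    (span_intForm_le_ker_constantCoeff _ (hG.mem_of_mem hg))
  have hmem := Ideal.monomial_mem_of_forall_C_mul_X_mem (C_det_mul_X_mem_span_intForm M) hLT
  exact hdvd.trans (hG.LCoef_dvd_of_monomial_mem hg hmem)

/-- key step of Proposition 7.5: if the hyperplanes `H_{i₁},…,H_{i_l}` of a
central arrangement over `ℚ` meet only at the origin and a prime `p` divides the leading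
coefficient of some element of a minimal strong `σ`-Gröbner basis of `⟨α_{i₁},…,α_{i_l}⟩_ℤ`,
then `p` divides the determinant of the `l × l` coefficient matrix `C_J` (equivalently, the
product of its elementary divisors). -/
theorem stmt19 {l n : ℕ} (a : Fin n → Fin l → ℤ) (t : Fin l → Fin n) (ht : StrictMono t)
    (h0 : (⋂ j, hypSet ℚ (fun k => (a (t j) k : ℚ)) 0) = {0})
    (σ : MonomialOrder (Fin l)) (p : ℕ) (hp : p.Prime)
    (G : Finset (MvPolynomial (Fin l) ℤ))
    (hG : MinStrongGB σ G (Ideal.span (Set.range fun j => intForm (a (t j)))))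
    (g : MvPolynomial (Fin l) ℤ) (hg : g ∈ G) (hdvd : (p : ℤ) ∣ LCoef σ g) :
    (p : ℤ) ∣ (Matrix.of fun k j => a (t j) k : Matrix (Fin l) (Fin l) ℤ).det :=
  stmt19_general a t σ p G hG g hg hdvd
end
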